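/- arXiv:1809.05978 — 8 statements merged into one kernel-verified Lean document; each statement's English description precedes it below -/
import Mathlib

section
/- Let Γ and Σ be finite types, Q a finite type, δ : Q → Γ → Q, q₀ : Q and lam : Q → Γ → Σ be the data of a Mealy automaton, and let β be the observation function it defines. Then there exists a two-tape DFA A over Γ with state type (Q × Q) ⊕ Unit (hence with (Fintype.card Q)² + 1 states) such that for all histories τ, τ' of equal length: List.zip τ τ' ∈ A.accepts if and only if β̂ τ = β̂ τ'. -/
/-- The observation-history extension of an observation function `β`. -/
def obsHist {Γ Ob : Type*} (β : List Γ → Ob) (τ : List Γ) : List Ob :=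
  (List.range τ.length).map fun i => β (τ.take (i + 1))

/-- The observation function defined by a Mealy automaton `(Q, δ, q₀, lam)`:
`β (τ ++ [c]) = lam (List.foldl δ q₀ τ) c`, and `β [] = default`. -/
def mealyObs {Γ Q Ob : Type*} [Inhabited Ob] (δ : Q → Γ → Q) (q₀ : Q)
    (lam : Q → Γ → Ob) (τ : List Γ) : Ob :=
  match τ.getLast? with
  | none => default
  | some c => lam (List.foldl δ q₀ τ.dropLast) c


lemma obsHist_concat {Γ Ob : Type*} (β : List Γ → Ob) (σ : List Γ) (a : Γ) :
    obsHist β (σ ++ [a]) = obsHist β σ ++ [β (σ ++ [a])] := by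
  simp only [obsHist, List.length_append, List.length_singleton, List.range_succ,
    List.map_append, List.map_cons, List.map_nil]
  congr 1
  · apply List.map_congr_left
    intro i hi
    simp only [List.mem_range] at hi
    rw [List.take_append_of_le_length (by omega)]
  · rw [List.take_of_length_le (by simp)]

lemma mealyObs_concat {Γ Q Ob : Type*} [Inhabited Ob] (δ : Q → Γ → Q) (q₀ : Q)
    (lam : Q → Γ → Ob) (σ : List Γ) (a : Γ) :
    mealyObs δ q₀ lam (σ ++ [a]) = lam (List.foldl δ q₀ σ) a := by
  simp [mealyObs, List.getLast?_concat, List.dropLast_concat]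

open scoped Classical in
noncomputable def mealyDFA {Γ Ob Q : Type*} (δ : Q → Γ → Q) (q₀ : Q) (lam : Q → Γ → Ob) :
    DFA (Γ × Γ) ((Q × Q) ⊕ Unit) where
  step s p := match s with
    | Sum.inl (q, q') =>
        if lam q p.1 = lam q' p.2 then Sum.inl (δ q p.1, δ q' p.2) else Sum.inr ()
    | Sum.inr _ => Sum.inr ()
  start := Sum.inl (q₀, q₀)
  accept := {s | ∃ x, s = Sum.inl x}

/-- Proposition: observation is recognisable by distinction:
for every Mealy automaton there is a two-tape DFA with state type `(Q × Q) ⊕ Unit`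
recognising the kernel of its observation-history function. -/
theorem mealy_to_twoTape {Γ Ob Q : Type*} [Fintype Γ] [Fintype Ob] [Fintype Q]
    [Inhabited Ob] (δ : Q → Γ → Q) (q₀ : Q) (lam : Q → Γ → Ob) :
    ∃ A : DFA (Γ × Γ) ((Q × Q) ⊕ Unit),
      ∀ τ τ' : List Γ, τ.length = τ'.length →
        (List.zip τ τ' ∈ A.accepts ↔
          obsHist (mealyObs δ q₀ lam) τ = obsHist (mealyObs δ q₀ lam) τ') := by
  classical
  set β := mealyObs δ q₀ lam with hβ
  refine ⟨mealyDFA δ q₀ lam, ?_⟩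
  have key : ∀ (σ σ' : List Γ), σ.length = σ'.length →
      (mealyDFA δ q₀ lam).eval (σ.zip σ') =
        if obsHist β σ = obsHist β σ'
        then Sum.inl (List.foldl δ q₀ σ, List.foldl δ q₀ σ')
        else Sum.inr () := by
    intro σ
    induction σ using List.reverseRecOn with
    | nil =>
      intro σ' h
      have : σ' = [] := by simpa using h.symm
      subst this
      simp [mealyDFA, DFA.eval, DFA.evalFrom]
    | append_singleton l a ih =>
      intro σ' h
      rcases σ'.eq_nil_or_concat with rfl | ⟨l', b, rfl⟩
      · simp at h
      rw [List.concat_eq_append] at *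
      have hlen : l.length = l'.length := by simpa using h
      rw [List.zip_append hlen]
      simp only [List.zip_cons_cons, List.zip_nil_right]
      rw [DFA.eval_append_singleton, ih l' hlen]
      rw [obsHist_concat, obsHist_concat]
      have hobslen : (obsHist β l).length = (obsHist β l').length := by
        simp [obsHist, hlen]
      by_cases hobs : obsHist β l = obsHist β l'
      · simp only [hobs, if_true]
        by_cases hlam : lam (List.foldl δ q₀ l) a = lam (List.foldl δ q₀ l') b
        · have : β (l ++ [a]) = β (l' ++ [b]) := by
            rw [hβ, mealyObs_concat, mealyObs_concat]; exact hlam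
          simp [mealyDFA, hlam, this, hobs]
        · have : β (l ++ [a]) ≠ β (l' ++ [b]) := by
            rw [hβ, mealyObs_concat, mealyObs_concat]; exact hlam
          simp [mealyDFA, hlam, this, hobs]
      · have : ¬ (obsHist β l ++ [β (l ++ [a])] = obsHist β l' ++ [β (l' ++ [b])]) := by
          intro hc
          exact hobs (List.append_inj' hc (by simp)).1
        simp [mealyDFA, hobs, this]
  intro τ τ' h
  rw [DFA.mem_accepts, key τ τ' h]
  by_cases hobs : obsHist β τ = obsHist β τ' <;> simp [mealyDFA, hobs]
end

section
/- Let Γ = Fin 3 and define the relation rel on List Γ by: rel(τ, τ') iff τ.length = τ'.length and (τ = τ' or the letter 2 occurs in neither τ nor τ'). Then: (a) rel is an indistinguishability relation; (b) there exists a two-tape DFA over Γ with a finite state type (five states suffice) recognizing rel, i.e. for all equal-length τ, τ': List.zip τ τ' is accepted iff rel(τ, τ'); and (c) there is NO finite type Σ and function β : List Γ → Σ such that for all τ, τ': β̂ τ = β̂ τ' ↔ rel(τ, τ'). In particular, a regular indistinguishability relation need not correspond to any regular observation function. -/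
/-- Two histories over `Fin 3` are related iff they have equal length and are
equal or neither contains the letter `2`. -/
def relC (τ τ' : List (Fin 3)) : Prop :=
  τ.length = τ'.length ∧ (τ = τ' ∨ ((2 : Fin 3) ∉ τ ∧ (2 : Fin 3) ∉ τ'))

/-- Step function of the 5-state two-tape DFA:
`0` = "equal so far and no 2 seen", `1` = "equal so far, some 2 seen",
`2` = "not equal, no 2 seen", `3` = reject sink, `4` unused. -/
def stpC : Fin 5 → (Fin 3 × Fin 3) → Fin 5 := fun s p =>
  if s = 0 then
    (if p.1 = p.2 then (if p.1 = 2 then 1 else 0)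
     else (if p.1 ≠ 2 ∧ p.2 ≠ 2 then 2 else 3))
  else if s = 1 then (if p.1 = p.2 then 1 else 3)
  else if s = 2 then (if p.1 ≠ 2 ∧ p.2 ≠ 2 then 2 else 3)
  else 3

/-- The state reached after reading a word. -/
def gC (l : List (Fin 3 × Fin 3)) : Fin 5 :=
  if l.map Prod.fst = l.map Prod.snd then
    (if ∀ p ∈ l, p.1 ≠ 2 ∧ p.2 ≠ 2 then 0 else 1)
  else
    (if ∀ p ∈ l, p.1 ≠ 2 ∧ p.2 ≠ 2 then 2 else 3)

lemma app_single_eq {α : Type*} (A B : List α) (a b : α) :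
    A ++ [a] = B ++ [b] ↔ A = B ∧ a = b := by
  constructor
  · intro h
    obtain ⟨h1, h2⟩ := List.append_inj' h rfl
    simp at h2
    exact ⟨h1, h2⟩
  · rintro ⟨rfl, rfl⟩; rfl

set_option maxHeartbeats 1000000 in
lemma stp_gC (l : List (Fin 3 × Fin 3)) (p : Fin 3 × Fin 3) :
    stpC (gC l) p = gC (l ++ [p]) := by
  simp only [stpC, gC, List.map_append, List.map_cons, List.map_nil, List.forall_mem_append,
    List.forall_mem_singleton, app_single_eq]
  by_cases hE : l.map Prod.fst = l.map Prod.snd <;>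
  by_cases hN : ∀ p ∈ l, p.1 ≠ 2 ∧ p.2 ≠ 2 <;>
  by_cases hp : p.1 = p.2 <;>
  by_cases h1 : p.1 = 2 <;>
  by_cases h2 : p.2 = 2 <;>
  simp only [hE, hN, hp, h1, h2, if_true, if_false, eq_self_iff_true, true_and, and_true,
    false_and, and_false, if_pos, if_neg, not_true, not_false_iff] <;>
  split_ifs <;> first | rfl | tauto

def dfaC : DFA (Fin 3 × Fin 3) (Fin 5) :=
  ⟨stpC, 0, {0, 1, 2}⟩

lemma dfaC_eval (l : List (Fin 3 × Fin 3)) : dfaC.eval l = gC l := by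
  induction l using List.reverseRecOn with
  | nil => simp [DFA.eval, DFA.evalFrom, dfaC, gC]
  | append_singleton l p ih =>
    have : dfaC.eval (l ++ [p]) = dfaC.step (dfaC.eval l) p := by
      simp [DFA.eval, DFA.evalFrom]
    rw [this, ih]
    exact stp_gC l p

lemma zipN (τ τ' : List (Fin 3)) (h : τ.length = τ'.length) :
    (∀ p ∈ List.zip τ τ', p.1 ≠ 2 ∧ p.2 ≠ 2) ↔ ((2 : Fin 3) ∉ τ ∧ (2 : Fin 3) ∉ τ') := by
  induction τ generalizing τ' with
  | nil => cases τ' <;> simp_all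
  | cons a t ih =>
    cases τ' with
    | nil => simp at h
    | cons b t' =>
      simp only [List.length_cons, Nat.succ_inj] at h
      rw [List.zip_cons_cons, List.forall_mem_cons, ih t' h]
      simp only [List.mem_cons, not_or]
      constructor
      · rintro ⟨⟨h1, h2⟩, h3, h4⟩
        exact ⟨⟨fun e => h1 e.symm, h3⟩, fun e => h2 e.symm, h4⟩
      · rintro ⟨⟨h1, h2⟩, h3, h4⟩
        exact ⟨⟨fun e => h1 e.symm, fun e => h3 e.symm⟩, h2, h4⟩

lemma obsHist_append_singleton {Γ Ob : Type*} (β : List Γ → Ob) (x : List Γ) (c : Γ) :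
    obsHist β (x ++ [c]) = obsHist β x ++ [β (x ++ [c])] := by
  simp only [obsHist, List.length_append, List.length_singleton, List.range_succ,
    List.map_append, List.map_cons, List.map_nil]
  congr 1
  · apply List.map_congr_left
    intro i hi
    simp only [List.mem_range] at hi
    rw [List.take_append_of_le_length (by omega)]
  · rw [show List.take (x.length + 1) (x ++ [c]) = x ++ [c] from
      List.take_of_length_le (by simp)]

/-- `relC` is a regular indistinguishability relation (recognisable
by a five-state two-tape DFA) that does not correspond to any observation
function with finite range. -/
theorem regular_relation_without_observation :
    -- (a) relC is an indistinguishability relation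
    (Equivalence relC ∧
      ∀ τ τ' ρ ρ' : List (Fin 3), relC τ τ' → ρ <+: τ → ρ' <+: τ' →
        ρ.length = ρ'.length → relC ρ ρ') ∧
    -- (b) relC is recognised by a two-tape DFA with five states
    (∃ A : DFA (Fin 3 × Fin 3) (Fin 5),
      ∀ τ τ' : List (Fin 3), τ.length = τ'.length →
        (List.zip τ τ' ∈ A.accepts ↔ relC τ τ')) ∧
    -- (c) no finite-range observation function has kernel relC
    (¬ ∃ (Ob : Type) (_ : Fintype Ob) (β : List (Fin 3) → Ob),
        ∀ τ τ', obsHist β τ = obsHist β τ' ↔ relC τ τ') := by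
  classical
  refine ⟨⟨⟨fun τ => ⟨rfl, Or.inl rfl⟩, ?_, ?_⟩, ?_⟩, ⟨dfaC, ?_⟩, ?_⟩
  · rintro τ τ' ⟨h, h2⟩
    exact ⟨h.symm, by tauto⟩
  · rintro τ τ' τ'' ⟨h1, h2⟩ ⟨h3, h4⟩
    refine ⟨h1.trans h3, ?_⟩
    rcases h2 with rfl | ⟨ha, hb⟩
    · exact h4
    · rcases h4 with rfl | ⟨hc, hd⟩
      · exact Or.inr ⟨ha, hb⟩
      · exact Or.inr ⟨ha, hd⟩
  · rintro τ τ' ρ ρ' ⟨hl, h2⟩ hp hp' hlen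
    refine ⟨hlen, ?_⟩
    rcases h2 with rfl | ⟨ha, hb⟩
    · left
      rw [List.prefix_iff_eq_take] at hp hp'
      rw [hp, hp', hlen]
    · exact Or.inr ⟨fun h => ha (hp.subset h), fun h => hb (hp'.subset h)⟩
  · intro τ τ' hlen
    have hE : (List.zip τ τ').map Prod.fst = τ := List.map_fst_zip (le_of_eq hlen)
    have hE' : (List.zip τ τ').map Prod.snd = τ' := List.map_snd_zip (ge_of_eq hlen)
    have hacc : List.zip τ τ' ∈ dfaC.accepts ↔ gC (List.zip τ τ') ∈ ({0,1,2} : Set (Fin 5)) := by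
      rw [DFA.mem_accepts, dfaC_eval]; rfl
    have hNiff := zipN τ τ' hlen
    rw [hacc]
    unfold gC
    rw [hE, hE']
    simp only [hNiff]
    by_cases he : τ = τ' <;> by_cases hn : ((2:Fin 3) ∉ τ ∧ (2:Fin 3) ∉ τ') <;>
      simp [he, hn, relC, hlen] <;> tauto
  · rintro ⟨Ob, hF, β, hβ⟩
    set n := Fintype.card Ob with hn
    let enc : (Fin n → Fin 2) → List (Fin 3) := fun v => List.ofFn fun i => (v i).castSucc
    have henc_len : ∀ v, (enc v).length = n := fun v => by simp [enc]
    have henc_no2 : ∀ v, (2 : Fin 3) ∉ enc v := by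
      intro v h
      simp only [enc, List.mem_ofFn] at h
      obtain ⟨i, hi⟩ := h
      have hlt := (v i).isLt
      have hval : ((v i) : ℕ) = 2 := by simpa using congrArg Fin.val hi
      omega
    have henc_inj : Function.Injective enc := by
      intro v w h
      have h2 := List.ofFn_injective h
      funext i
      exact Fin.castSucc_injective _ (congrFun h2 i)
    let g : (Fin n → Fin 2) → Ob := fun v => β (enc v ++ [2])
    have hg : Function.Injective g := by
      intro v w hgvw
      apply henc_inj
      have hrel : relC (enc v) (enc w) :=
        ⟨by rw [henc_len, henc_len], Or.inr ⟨henc_no2 v, henc_no2 w⟩⟩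
      have hobs : obsHist β (enc v) = obsHist β (enc w) := (hβ _ _).2 hrel
      have hobs2 : obsHist β (enc v ++ [2]) = obsHist β (enc w ++ [2]) := by
        rw [obsHist_append_singleton, obsHist_append_singleton, hobs]
        simp only [g] at hgvw
        rw [hgvw]
      have hrel2 : relC (enc v ++ [2]) (enc w ++ [2]) := (hβ _ _).1 hobs2
      rcases hrel2.2 with he | ⟨hc, _⟩
      · exact List.append_inj_left he (by rw [henc_len, henc_len])
      · exact absurd (by simp : (2:Fin 3) ∈ enc v ++ [2]) hc
    have hcard : Fintype.card (Fin n → Fin 2) ≤ Fintype.card Ob :=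
      Fintype.card_le_of_injective g hg
    simp only [Fintype.card_fun, Fintype.card_fin] at hcard
    have : n < 2 ^ n := Nat.lt_two_pow_self (n := n)
    omega
end

section
/- Let Γ be a finite linearly ordered type, n ≥ 1 a natural number, and ~ an indistinguishability relation on Γ such that for every history τ the set of successor classes {[τ' ++ [c]] : τ' ~ τ, c ∈ Γ} has cardinality at most n. Then there exists an observation function β : List Γ → Fin n whose kernel of observation histories is exactly ~, i.e. for all histories τ, τ': β̂ τ = β̂ τ' if and only if τ ~ τ'. -/
open Classical in
/-- A canonical representative of a finite nonempty set of lists. -/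
noncomputable def clsRep {Γ : Type*} [LinearOrder Γ] (C : Set (List Γ)) : List Γ :=
  if h : C.Finite ∧ C.Nonempty then h.1.toFinset.min' (by simpa using h.2) else []

lemma clsRep_mem {Γ : Type*} [LinearOrder Γ] {C : Set (List Γ)} (hf : C.Finite)
    (hne : C.Nonempty) : clsRep C ∈ C := by
  rw [clsRep, dif_pos ⟨hf, hne⟩]
  have := hf.toFinset.min'_mem (by simpa using hne)
  simpa using this

lemma obsHist_append {Γ Ob : Type*} (β : List Γ → Ob) (σ : List Γ) (c : Γ) :
    obsHist β (σ ++ [c]) = obsHist β σ ++ [β (σ ++ [c])] := by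
  simp only [obsHist, List.length_append, List.length_singleton, List.range_succ,
    List.map_append, List.map_cons, List.map_nil]
  congr 1
  · apply List.map_congr_left
    intro i hi
    rw [List.mem_range] at hi
    rw [List.take_append_of_le_length (by omega)]
  · rw [show σ.length + 1 = (σ ++ [c]).length by simp, List.take_length]

lemma length_obsHist {Γ Ob : Type*} (β : List Γ → Ob) (τ : List Γ) :
    (obsHist β τ).length = τ.length := by simp [obsHist]

/-- an indistinguishability relation whose information tree has
branching degree at most `n` is the kernel of an observation function with
range `Fin n`. -/
theorem bounded_branching_gives_observation {Γ : Type*} [Fintype Γ] [LinearOrder Γ]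
    (n : ℕ) (hn : 1 ≤ n) (sim : List Γ → List Γ → Prop)
    (hequiv : Equivalence sim)
    (hlen : ∀ τ τ', sim τ τ' → τ.length = τ'.length)
    (hpre : ∀ τ τ' ρ ρ' : List Γ, sim τ τ' → ρ <+: τ → ρ' <+: τ' →
      ρ.length = ρ'.length → sim ρ ρ')
    (hbound : ∀ τ : List Γ,
      {C : Set (List Γ) | ∃ (τ' : List Γ) (c : Γ), sim τ' τ ∧
        C = {x | sim x (τ' ++ [c])}}.Finite ∧
      {C : Set (List Γ) | ∃ (τ' : List Γ) (c : Γ), sim τ' τ ∧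
        C = {x | sim x (τ' ++ [c])}}.ncard ≤ n) :
    ∃ β : List Γ → Fin n, ∀ τ τ' : List Γ, obsHist β τ = obsHist β τ' ↔ sim τ τ' := by
  classical
  -- notation
  let cls : List Γ → Set (List Γ) := fun τ => {x | sim x τ}
  let succ : List Γ → Set (Set (List Γ)) := fun τ =>
    {C : Set (List Γ) | ∃ (τ' : List Γ) (c : Γ), sim τ' τ ∧
        C = {x | sim x (τ' ++ [c])}}
  -- basic facts about classes
  have cls_eq : ∀ {ρ ρ'}, sim ρ ρ' → cls ρ = cls ρ' := by
    intro ρ ρ' h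
    ext x
    exact ⟨fun hx => hequiv.trans hx h, fun hx => hequiv.trans hx (hequiv.symm h)⟩
  have cls_self : ∀ ρ, ρ ∈ cls ρ := fun ρ => hequiv.refl ρ
  have cls_fin : ∀ ρ, (cls ρ).Finite := by
    intro ρ
    apply (List.finite_length_eq (α := Γ) (n := ρ.length)).subset
    intro x hx
    exact hlen x ρ hx
  have cls_inj : ∀ {ρ ρ' : List Γ} {x}, x ∈ cls ρ → x ∈ cls ρ' → cls ρ = cls ρ' := by
    intro ρ ρ' x hx hx'
    exact cls_eq (hequiv.trans (hequiv.symm hx) hx')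
  -- succ sets
  have succ_eq : ∀ {σ σ'}, sim σ σ' → succ σ = succ σ' := by
    intro σ σ' h
    ext C
    constructor
    · rintro ⟨a, c, ha, rfl⟩; exact ⟨a, c, hequiv.trans ha h, rfl⟩
    · rintro ⟨a, c, ha, rfl⟩; exact ⟨a, c, hequiv.trans ha (hequiv.symm h), rfl⟩
  have mem_succ : ∀ (τ : List Γ), τ ≠ [] → cls τ ∈ succ τ.dropLast := by
    intro τ hτ
    refine ⟨τ.dropLast, τ.getLast hτ, hequiv.refl _, ?_⟩
    show cls τ = cls (τ.dropLast ++ [τ.getLast hτ])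
    rw [List.dropLast_append_getLast hτ]
  -- the finset of successor classes and its sorted list of representatives
  let F : List Γ → Finset (Set (List Γ)) := fun σ => (hbound σ).1.toFinset
  let L : List Γ → List (List Γ) :=
    fun σ => ((F σ).image clsRep).sort (· ≤ ·)
  have mem_F_iff : ∀ (σ : List Γ) (C : Set (List Γ)), C ∈ F σ ↔ C ∈ succ σ := by
    intro σ C
    exact (hbound σ).1.mem_toFinset
  have F_congr : ∀ {σ σ'}, sim σ σ' → F σ = F σ' := by
    intro σ σ' h
    apply Finset.ext
    intro C
    rw [mem_F_iff, mem_F_iff, succ_eq h]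
  have L_congr : ∀ {σ σ'}, sim σ σ' → L σ = L σ' := by
    intro σ σ' h
    show ((F σ).image clsRep).sort (· ≤ ·) = ((F σ').image clsRep).sort (· ≤ ·)
    rw [F_congr h]
  have rep_mem_cls : ∀ ρ : List Γ, clsRep (cls ρ) ∈ cls ρ := by
    intro ρ
    exact clsRep_mem (cls_fin ρ) ⟨ρ, cls_self ρ⟩
  have L_len : ∀ σ, (L σ).length ≤ n := by
    intro σ
    show (((F σ).image clsRep).sort (· ≤ ·)).length ≤ n
    rw [Finset.length_sort]
    calc ((F σ).image clsRep).card ≤ (F σ).card := Finset.card_image_le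
      _ ≤ n := by
        rw [show (F σ).card = (hbound σ).1.toFinset.card from rfl,
          ← Set.ncard_eq_toFinset_card _ (hbound σ).1]
        exact (hbound σ).2
  have mem_L : ∀ {σ} (τ : List Γ), cls τ ∈ succ σ → clsRep (cls τ) ∈ L σ := by
    intro σ τ hτ
    show clsRep (cls τ) ∈ ((F σ).image clsRep).sort (· ≤ ·)
    rw [Finset.mem_sort, Finset.mem_image]
    exact ⟨cls τ, (mem_F_iff σ _).2 hτ, rfl⟩
  -- the observation function
  letI : BEq (List Γ) := instBEqOfDecidableEq
  let idx : List Γ → ℕ := fun τ => (L τ.dropLast).idxOf (clsRep (cls τ))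
  let β : List Γ → Fin n := fun τ => ⟨idx τ % n, Nat.mod_lt _ hn⟩
  have idx_lt : ∀ (τ : List Γ), τ ≠ [] → idx τ < n := by
    intro τ hτ
    show (L τ.dropLast).idxOf (clsRep (cls τ)) < n
    calc (L τ.dropLast).idxOf (clsRep (cls τ)) < (L τ.dropLast).length :=
          List.idxOf_lt_length_iff.2 (mem_L τ (mem_succ τ hτ))
      _ ≤ n := L_len _
  -- well-definedness of β on classes
  have sim_dropLast : ∀ {ρ ρ'}, sim ρ ρ' → sim ρ.dropLast ρ'.dropLast := by
    intro ρ ρ' h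
    exact hpre ρ ρ' _ _ h ρ.dropLast_prefix ρ'.dropLast_prefix
      (by simp [List.length_dropLast, hlen ρ ρ' h])
  have β_congr : ∀ {ρ ρ'}, sim ρ ρ' → β ρ = β ρ' := by
    intro ρ ρ' h
    have : idx ρ = idx ρ' := by
      show (L ρ.dropLast).idxOf (clsRep (cls ρ)) =
        (L ρ'.dropLast).idxOf (clsRep (cls ρ'))
      rw [cls_eq h, L_congr (sim_dropLast h)]
    show (⟨idx ρ % n, _⟩ : Fin n) = ⟨idx ρ' % n, _⟩
    simp [this]
  -- injectivity of representatives across classes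
  have rep_inj : ∀ {τ τ' : List Γ}, clsRep (cls τ) = clsRep (cls τ') → sim τ τ' := by
    intro τ τ' hrep
    have h1 := rep_mem_cls τ
    have h2 := rep_mem_cls τ'
    rw [hrep] at h1
    have hcc : cls τ = cls τ' := cls_inj h1 h2
    have h3 : τ ∈ cls τ' := hcc ▸ cls_self τ
    exact h3
  -- forward direction by induction on length
  have forward : ∀ (N : ℕ) (τ τ' : List Γ), τ.length = N →
      obsHist β τ = obsHist β τ' → sim τ τ' := by
    intro N
    induction N with
    | zero =>
      intro τ τ' h1 h2
      have hτ : τ = [] := List.length_eq_zero_iff.1 h1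
      have : τ'.length = 0 := by
        have := congrArg List.length h2
        simpa [length_obsHist, hτ] using this.symm
      rw [hτ, List.length_eq_zero_iff.1 this]
      exact hequiv.refl []
    | succ N ih =>
      intro τ τ' h1 h2
      have hlen' : τ'.length = N + 1 := by
        have := congrArg List.length h2
        simpa [length_obsHist, h1] using this.symm
      have hτ : τ ≠ [] := by intro h; simp [h] at h1
      have hτ' : τ' ≠ [] := by intro h; simp [h] at hlen'
      obtain ⟨σ, c, rfl⟩ : ∃ σ c, τ = σ ++ [c] :=
        ⟨τ.dropLast, τ.getLast hτ, (List.dropLast_append_getLast hτ).symm⟩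
      obtain ⟨σ', c', rfl⟩ : ∃ σ c, τ' = σ ++ [c] :=
        ⟨τ'.dropLast, τ'.getLast hτ', (List.dropLast_append_getLast hτ').symm⟩
      rw [obsHist_append, obsHist_append] at h2
      have hσlen : σ.length = σ'.length := by
        simp only [List.length_append, List.length_singleton] at h1 hlen'
        omega
      have hsplit := List.append_inj h2 (by simp [length_obsHist, hσlen])
      have hsim_σ : sim σ σ' := ih σ σ' (by simpa using h1) hsplit.1
      have hβeq : β (σ ++ [c]) = β (σ' ++ [c']) := by
        have := hsplit.2
        simpa using this
      -- both classes live in succ σ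
      have hmem1 : cls (σ ++ [c]) ∈ succ σ := ⟨σ, c, hequiv.refl σ, rfl⟩
      have hmem2 : cls (σ' ++ [c']) ∈ succ σ := by
        rw [succ_eq hsim_σ]; exact ⟨σ', c', hequiv.refl σ', rfl⟩
      -- indices agree as naturals
      have hi1 : idx (σ ++ [c]) < n := idx_lt _ (by simp)
      have hi2 : idx (σ' ++ [c']) < n := idx_lt _ (by simp)
      have hidxeq : idx (σ ++ [c]) = idx (σ' ++ [c']) := by
        have hval : idx (σ ++ [c]) % n = idx (σ' ++ [c']) % n :=
          congrArg Fin.val hβeq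
        rwa [Nat.mod_eq_of_lt hi1, Nat.mod_eq_of_lt hi2] at hval
      -- unfold idx into indexOf in the common list L σ
      have e1 : idx (σ ++ [c]) = (L σ).idxOf (clsRep (cls (σ ++ [c]))) := by
        show (L (σ ++ [c]).dropLast).idxOf _ = _
        rw [List.dropLast_concat]
      have e2 : idx (σ' ++ [c']) = (L σ).idxOf (clsRep (cls (σ' ++ [c']))) := by
        show (L (σ' ++ [c']).dropLast).idxOf _ = _
        rw [List.dropLast_concat, L_congr (hequiv.symm hsim_σ)]
      rw [e1, e2] at hidxeq
      have hrepmem1 : clsRep (cls (σ ++ [c])) ∈ L σ := mem_L _ hmem1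
      have hrepmem2 : clsRep (cls (σ' ++ [c'])) ∈ L σ := mem_L _ hmem2
      exact rep_inj ((List.idxOf_inj hrepmem1).1 hidxeq)
  -- backward direction
  have backward : ∀ (τ τ' : List Γ), sim τ τ' → obsHist β τ = obsHist β τ' := by
    intro τ τ' h
    have hl : τ.length = τ'.length := hlen τ τ' h
    rw [obsHist, obsHist, ← hl]
    apply List.map_congr_left
    intro i hi
    rw [List.mem_range] at hi
    apply β_congr
    exact hpre τ τ' _ _ h (List.take_prefix _ _) (List.take_prefix _ _)
      (by simp [List.length_take]; omega)
  exact ⟨β, fun τ τ' => ⟨forward τ.length τ τ' rfl, backward τ τ'⟩⟩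
end

section
/- Let Γ be a finite nonempty type, σ a finite type, and A : DFA (Γ × Γ) σ a two-tape DFA recognizing an indistinguishability relation ~ on Γ (for equal-length τ, τ': τ ~ τ' ↔ List.zip τ τ' ∈ A.accepts). Then the following are equivalent: (i) there exist a finite type Q, a finite type Σ, and Mealy data δ : Q → Γ → Q, q₀ : Q, lam : Q → Γ → Σ such that the defined observation function β satisfies β̂ τ = β̂ τ' ↔ τ ~ τ' for all τ, τ'; (ii) there exists n : ℕ such that for every history τ the set of successor classes {[τ' ++ [c]] : τ' ~ τ, c ∈ Γ} has cardinality at most n (the information tree of ~ has bounded branching). -/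
namespace MealyChar

theorem obsHist_length {Γ Ob : Type*} (β : List Γ → Ob) (τ : List Γ) :
    (obsHist β τ).length = τ.length := by
  simp [obsHist]

theorem obsHist_concat {Γ Ob : Type*} (β : List Γ → Ob) (x : List Γ) (c : Γ) :
    obsHist β (x ++ [c]) = obsHist β x ++ [β (x ++ [c])] := by
  unfold obsHist
  rw [List.length_append, List.length_singleton, List.range_succ, List.map_append]
  congr 1
  · apply List.map_congr_left
    intro i hi
    rw [List.mem_range] at hi
    rw [List.take_append_of_le_length (by omega)]
  · simp only [List.map_cons, List.map_nil]
    rw [List.take_of_length_le (by simp)]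

section Sim

variable {Γ : Type*} (sim : List Γ → List Γ → Prop)

/-- The `sim`-class of a history. -/
def cls (τ : List Γ) : Set (List Γ) := {x | sim x τ}

/-- The set of successor classes of the class of `τ`. -/
def succs (τ : List Γ) : Set (Set (List Γ)) :=
  {C | ∃ τ' c, sim τ' τ ∧ C = cls sim (τ' ++ [c])}

variable {sim}

theorem mem_cls_self (hequiv : Equivalence sim) (τ : List Γ) : τ ∈ cls sim τ := hequiv.refl τ

theorem cls_eq_of_sim (hequiv : Equivalence sim) {a b : List Γ} (h : sim a b) : cls sim a = cls sim b := by
  ext z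
  exact ⟨fun hz => hequiv.trans hz h, fun hz => hequiv.trans hz (hequiv.symm h)⟩

theorem cls_eq_of_mem (hequiv : Equivalence sim) {z τ : List Γ} (h : z ∈ cls sim τ) : cls sim z = cls sim τ :=
  cls_eq_of_sim hequiv h

theorem succs_eq_of_sim (hequiv : Equivalence sim) {a b : List Γ} (h : sim a b) : succs sim a = succs sim b := by
  ext C
  constructor
  · rintro ⟨τ', c, h1, rfl⟩
    exact ⟨τ', c, hequiv.trans h1 h, rfl⟩
  · rintro ⟨τ', c, h1, rfl⟩
    exact ⟨τ', c, hequiv.trans h1 (hequiv.symm h), rfl⟩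

theorem cls_finite (hlen : ∀ τ τ', sim τ τ' → τ.length = τ'.length) [Finite Γ] (τ : List Γ) : (cls sim τ).Finite := by
  apply Set.Finite.subset (List.finite_length_eq Γ τ.length)
  intro x hx
  exact hlen x τ hx

theorem succs_finite (hlen : ∀ τ τ', sim τ τ' → τ.length = τ'.length) [Finite Γ] [Nonempty Γ] (τ : List Γ) : (succs sim τ).Finite := by
  have : succs sim τ ⊆ (fun p : List Γ × Γ => cls sim (p.1 ++ [p.2])) ''
      ((cls sim τ) ×ˢ (Set.univ : Set Γ)) := by
    rintro C ⟨τ', c, h1, rfl⟩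
    exact ⟨(τ', c), ⟨h1, trivial⟩, rfl⟩
  exact Set.Finite.subset (Set.Finite.image _ (Set.Finite.prod (cls_finite hlen τ) (Set.finite_univ))) this

/-- Part 1: a Mealy-representable relation has bounded branching. -/
theorem branching_bound (hequiv : Equivalence sim) {Ob : Type*} [Fintype Ob] (β : List Γ → Ob)
    (hker : ∀ τ τ' : List Γ, obsHist β τ = obsHist β τ' ↔ sim τ τ') (τ : List Γ) :
    (succs sim τ).ncard ≤ Fintype.card Ob := by
  have hchoice : ∀ C : ↥(succs sim τ), ∃ p : List Γ × Γ,
      cls sim (p.1 ++ [p.2]) = (C : Set (List Γ)) ∧ sim p.1 τ := by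
    rintro ⟨C, τ', c, h1, rfl⟩
    exact ⟨(τ', c), rfl, h1⟩
  choose p hp hsimp using hchoice
  have hinj : Function.Injective (fun C : ↥(succs sim τ) => β ((p C).1 ++ [(p C).2])) := by
    intro C C' hf
    have h1 : sim (p C).1 (p C').1 := hequiv.trans (hsimp C) (hequiv.symm (hsimp C'))
    have h2 : obsHist β ((p C).1 ++ [(p C).2]) = obsHist β ((p C').1 ++ [(p C').2]) := by
      rw [obsHist_concat, obsHist_concat, (hker _ _).mpr h1]
      exact congrArg (fun o => obsHist β (p C').1 ++ [o]) hf
    have h3 : sim ((p C).1 ++ [(p C).2]) ((p C').1 ++ [(p C').2]) := (hker _ _).mp h2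
    apply Subtype.ext
    rw [← hp C, ← hp C']
    exact cls_eq_of_sim hequiv h3
  calc (succs sim τ).ncard = Nat.card ↥(succs sim τ) := (Nat.card_coe_set_eq _).symm
    _ ≤ Nat.card Ob := Nat.card_le_card_of_injective _ hinj
    _ = Fintype.card Ob := Nat.card_eq_fintype_card

end Sim
section Val

set_option linter.unusedSectionVars false

variable {Γ : Type*} [Fintype Γ] [Nonempty Γ]

/-- A fixed injection of the alphabet into `ℕ`. -/
noncomputable def ordΓ (c : Γ) : ℕ := ((Fintype.equivFin Γ) c : ℕ)

theorem ordΓ_lt (c : Γ) : ordΓ c < Fintype.card Γ := ((Fintype.equivFin Γ) c).isLt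

theorem ordΓ_inj {c c' : Γ} (h : ordΓ c = ordΓ c') : c = c' := by
  have := (Fintype.equivFin Γ).injective (Fin.ext h)
  exact this

/-- Base-`|Γ|` encoding of histories. -/
noncomputable def val (l : List Γ) : ℕ :=
  l.foldl (fun a c => a * Fintype.card Γ + ordΓ c) 0

theorem val_concat (x : List Γ) (c : Γ) :
    val (x ++ [c]) = val x * Fintype.card Γ + ordΓ c := by
  simp [val, List.foldl_append]

theorem base_lt_iff {b a a' r r' : ℕ} (hr : r < b) (hr' : r' < b) :
    a * b + r < a' * b + r' ↔ a < a' ∨ (a = a' ∧ r < r') := by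
  constructor
  · intro h
    rcases lt_trichotomy a a' with h1 | h1 | h1
    · exact Or.inl h1
    · exact Or.inr ⟨h1, by subst h1; omega⟩
    · exfalso
      have : a' * b + b ≤ a * b := by
        have : a' + 1 ≤ a := h1
        calc a' * b + b = (a' + 1) * b := by ring
          _ ≤ a * b := Nat.mul_le_mul_right b this
      omega
  · rintro (h | ⟨rfl, h⟩)
    · have : a * b + b ≤ a' * b := by
        have : a + 1 ≤ a' := h
        calc a * b + b = (a + 1) * b := by ring
          _ ≤ a' * b := Nat.mul_le_mul_right b this
      omega
    · omega

theorem base_eq_iff {b a a' r r' : ℕ} (hr : r < b) (hr' : r' < b) :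
    a * b + r = a' * b + r' ↔ a = a' ∧ r = r' := by
  constructor
  · intro h
    rcases lt_trichotomy a a' with h1 | h1 | h1
    · exact absurd ((base_lt_iff hr hr').mpr (Or.inl h1)) (by omega)
    · exact ⟨h1, by subst h1; omega⟩
    · exact absurd ((base_lt_iff hr' hr).mpr (Or.inl h1)) (by omega)
  · rintro ⟨rfl, rfl⟩; rfl

theorem val_concat_lt_iff (x y : List Γ) (a b : Γ) :
    val (x ++ [a]) < val (y ++ [b]) ↔ val x < val y ∨ (val x = val y ∧ ordΓ a < ordΓ b) := by
  rw [val_concat, val_concat, base_lt_iff (ordΓ_lt a) (ordΓ_lt b)]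

theorem val_inj : ∀ (x y : List Γ), x.length = y.length → val x = val y → x = y := by
  intro x
  induction x using List.reverseRecOn with
  | nil => intro y hl _; exact (List.length_eq_zero_iff.mp hl.symm).symm
  | append_singleton x a ih =>
    intro y hl hv
    rcases List.eq_nil_or_concat y with rfl | ⟨ys, b, rfl⟩
    · simp at hl
    · simp only [List.concat_eq_append] at hl hv ⊢
      rw [val_concat, val_concat] at hv
      obtain ⟨h1, h2⟩ := (base_eq_iff (ordΓ_lt a) (ordΓ_lt b)).mp hv
      have hlen' : x.length = ys.length := by
        simp only [List.length_append, List.length_singleton] at hl; omega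
      rw [ih ys hlen' h1, ordΓ_inj h2]

theorem compare_val_concat (x y : List Γ) (a b : Γ) :
    compare (val (x ++ [a])) (val (y ++ [b])) =
      (compare (val x) (val y)).then (compare (ordΓ a) (ordΓ b)) := by
  rcases lt_trichotomy (val x) (val y) with h | h | h
  · rw [compare_lt_iff_lt.mpr ((val_concat_lt_iff x y a b).mpr (Or.inl h)),
      compare_lt_iff_lt.mpr h]
    rfl
  · rw [compare_eq_iff_eq.mpr h]
    rcases lt_trichotomy (ordΓ a) (ordΓ b) with h2 | h2 | h2
    · rw [compare_lt_iff_lt.mpr ((val_concat_lt_iff x y a b).mpr (Or.inr ⟨h, h2⟩)),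
        compare_lt_iff_lt.mpr h2]
      rfl
    · rw [compare_eq_iff_eq.mpr h2,
        compare_eq_iff_eq.mpr (by rw [val_concat, val_concat, h, h2])]
      rfl
    · rw [compare_gt_iff_gt.mpr ((val_concat_lt_iff y x b a).mpr (Or.inr ⟨h.symm, h2⟩)),
        compare_gt_iff_gt.mpr h2]
      rfl
  · rw [compare_gt_iff_gt.mpr ((val_concat_lt_iff y x b a).mpr (Or.inl h)),
      compare_gt_iff_gt.mpr h]
    rfl

end Val


instance : Fintype Ordering :=
  ⟨{Ordering.lt, Ordering.eq, Ordering.gt}, by intro x; cases x <;> simp⟩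

section Part2

set_option linter.unusedSectionVars false
set_option maxHeartbeats 1000000

variable {Γ : Type*} [Fintype Γ] [Nonempty Γ] {σ : Type*} [Fintype σ]

/-- The "type" of a tuple of histories: pairwise DFA states and pairwise comparisons. -/
abbrev TP (σ : Type*) (m : ℕ) : Type _ := (Fin m → Fin m → σ) × (Fin m → Fin m → Ordering)

variable (A : DFA (Γ × Γ) σ) (sim : List Γ → List Γ → Prop) (n : ℕ)

noncomputable def tpOf {m : ℕ} (u : Fin m → List Γ) : TP σ m :=
  (fun i j => A.eval ((u i).zip (u j)), fun i j => compare (val (u i)) (val (u j)))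

/-- The state space of the constructed Mealy machine. -/
abbrev QT (σ' : Type*) (k : ℕ) : Type _ := Set (TP σ' (k+3) × Set (TP σ' (k+4)))

noncomputable def extSet (u : Fin (n+3) → List Γ) : Set (TP σ (n+4)) :=
  {s | ∃ v : List Γ, sim v (u 0) ∧ s = tpOf A (Fin.snoc u v)}

/-- The abstraction of a history recorded by the machine state. -/
noncomputable def Φ (τ : List Γ) : QT σ n :=
  {p | ∃ u : Fin (n+3) → List Γ, u 0 = τ ∧ (∀ i, sim (u i) τ) ∧
    p = (tpOf A u, extSet A sim n u)}

noncomputable def tpu {m : ℕ} (t : TP σ m) (d : Fin m → Γ) : TP σ m :=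
  (fun i j => A.step (t.1 i j) (d i, d j),
   fun i j => (t.2 i j).then (compare (ordΓ (d i)) (ordΓ (d j))))

/-- The transition function of the constructed Mealy machine. -/
noncomputable def updQ (S : QT σ n) (c : Γ) : QT σ n :=
  {p' | ∃ t E, (t, E) ∈ S ∧ ∃ d : Fin (n+3) → Γ, d 0 = c ∧
    (∀ i, A.step (t.1 i 0) (d i, c) ∈ A.accept) ∧
    p' = (tpu A t d,
      {s' | ∃ s ∈ E, ∃ dv : Γ, A.step (s.1 (Fin.last (n+3)) 0) (dv, c) ∈ A.accept ∧
        s' = tpu A s (Fin.snoc d dv)})}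

theorem snoc_zero' {m : ℕ} {α : Type*} (u : Fin (m+1) → α) (v : α) :
    (Fin.snoc u v : Fin (m+2) → α) 0 = u 0 := by
  rw [show (0 : Fin (m+2)) = Fin.castSucc 0 from (Fin.castSucc_zero).symm, Fin.snoc_castSucc]

theorem snoc_one' {m : ℕ} {α : Type*} (u : Fin (m+2) → α) (v : α) :
    (Fin.snoc u v : Fin (m+3) → α) 1 = u 1 := by
  rw [show (1 : Fin (m+3)) = Fin.castSucc 1 from (Fin.castSucc_one).symm, Fin.snoc_castSucc]

theorem snoc_append {m : ℕ} (u : Fin m → List Γ) (v : List Γ) (d : Fin m → Γ) (dv : Γ) :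
    (Fin.snoc (fun i => u i ++ [d i]) (v ++ [dv]) : Fin (m+1) → List Γ) =
      fun i => (Fin.snoc u v : Fin (m+1) → List Γ) i ++ [(Fin.snoc d dv : Fin (m+1) → Γ) i] := by
  funext i
  induction i using Fin.lastCases with
  | last => simp
  | cast i => simp

theorem tp_update {m : ℕ} (u : Fin m → List Γ) (d : Fin m → Γ) (L : ℕ)
    (hL : ∀ i, (u i).length = L) :
    tpOf A (fun i => u i ++ [d i]) = tpu A (tpOf A u) d := by
  unfold tpOf tpu
  refine Prod.ext ?_ ?_
  · funext i j
    show A.eval ((u i ++ [d i]).zip (u j ++ [d j])) = A.step (A.eval ((u i).zip (u j))) (d i, d j)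
    rw [List.zip_append (by rw [hL i, hL j])]
    show A.evalFrom A.start (((u i).zip (u j)) ++ [(d i, d j)]) = _
    rw [DFA.evalFrom_append_singleton]
    rfl
  · funext i j
    simp only
    exact compare_val_concat (u i) (u j) (d i) (d j)

theorem sim_concat_iff
    (hlen : ∀ τ τ', sim τ τ' → τ.length = τ'.length)
    (hrec : ∀ τ τ' : List Γ, τ.length = τ'.length →
      (sim τ τ' ↔ List.zip τ τ' ∈ A.accepts)) {x y τ : List Γ} (hx : sim x τ) (hy : sim y τ) (a b : Γ) :
    sim (x ++ [a]) (y ++ [b]) ↔ A.step (A.eval (x.zip y)) (a, b) ∈ A.accept := by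
  have hl : x.length = y.length := (hlen _ _ hx).trans (hlen _ _ hy).symm
  rw [hrec _ _ (by simp [hl]), List.zip_append hl]
  show _ ++ [(a,b)] ∈ _ ↔ _
  rw [DFA.mem_accepts, DFA.eval, DFA.evalFrom_append_singleton]

theorem sim_dropLast
    (hlen : ∀ τ τ', sim τ τ' → τ.length = τ'.length)
    (hpre : ∀ τ τ' ρ ρ' : List Γ, sim τ τ' → ρ <+: τ → ρ' <+: τ' →
      ρ.length = ρ'.length → sim ρ ρ') {z w : List Γ} (h : sim z w) (hz : z ≠ []) :
    sim z.dropLast w.dropLast := by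
  apply hpre z w _ _ h (List.dropLast_prefix z) (List.dropLast_prefix w)
  rw [List.length_dropLast, List.length_dropLast, hlen _ _ h]

/-- The key update property of the state abstraction. -/
theorem Phi_concat (hequiv : Equivalence sim)
    (hlen : ∀ τ τ', sim τ τ' → τ.length = τ'.length)
    (hpre : ∀ τ τ' ρ ρ' : List Γ, sim τ τ' → ρ <+: τ → ρ' <+: τ' →
      ρ.length = ρ'.length → sim ρ ρ')
    (hrec : ∀ τ τ' : List Γ, τ.length = τ'.length →
      (sim τ τ' ↔ List.zip τ τ' ∈ A.accepts)) (τ : List Γ) (c : Γ) :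
    Φ A sim n (τ ++ [c]) = updQ A n (Φ A sim n τ) c := by
  have hττ : sim τ τ := hequiv.refl τ
  ext p
  constructor
  · rintro ⟨u', h0, hsim', rfl⟩
    have hne : ∀ i, u' i ≠ [] := by
      intro i
      have := hlen _ _ (hsim' i)
      simp only [List.length_append, List.length_singleton] at this
      intro hcon; rw [hcon] at this; simp at this
    set u : Fin (n+3) → List Γ := fun i => (u' i).dropLast with hu
    set d : Fin (n+3) → Γ := fun i => (u' i).getLast (hne i) with hd
    have hui : ∀ i, u i ++ [d i] = u' i := fun i => List.dropLast_append_getLast (hne i)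
    have husim : ∀ i, sim (u i) τ := by
      intro i
      have := sim_dropLast sim hlen hpre (hsim' i) (hne i)
      rwa [List.dropLast_concat] at this
    have hu0 : u 0 = τ := by rw [hu]; simp only; rw [h0, List.dropLast_concat]
    have hd0 : d 0 = c := by
      have := hui 0
      rw [hu0, h0] at this
      exact List.singleton_injective (List.append_cancel_left this)
    have hLu : ∀ i, (u i).length = τ.length := fun i => hlen _ _ (husim i)
    have hu'eq : u' = fun i => u i ++ [d i] := funext fun i => (hui i).symm
    refine ⟨tpOf A u, extSet A sim n u, ⟨u, hu0, husim, rfl⟩, d, hd0, ?_, ?_⟩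
    · intro i
      show A.step (A.eval ((u i).zip (u 0))) (d i, c) ∈ A.accept
      rw [hu0, ← sim_concat_iff A sim hlen hrec (husim i) hττ, hui i]
      exact hsim' i
    · have h1 : tpOf A u' = tpu A (tpOf A u) d := by
        rw [hu'eq]; exact tp_update A u d τ.length hLu
      refine Prod.ext (by rw [h1]) ?_
      show extSet A sim n u' = _
      ext s'
      constructor
      · rintro ⟨v', hv', rfl⟩
        rw [h0] at hv'
        have hvne : v' ≠ [] := by
          intro hcon
          have := hlen _ _ hv'
          rw [hcon] at this; simp at this
        set v := v'.dropLast with hv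
        set dv := v'.getLast hvne with hdv
        have hvi : v ++ [dv] = v' := List.dropLast_append_getLast hvne
        have hvsim : sim v τ := by
          have := sim_dropLast sim hlen hpre hv' hvne
          rwa [List.dropLast_concat] at this
        refine ⟨tpOf A (Fin.snoc u v : Fin (n+4) → List Γ), ⟨v, by rwa [hu0], rfl⟩, dv, ?_, ?_⟩
        · show A.step (A.eval (((Fin.snoc u v : Fin (n+4) → List Γ) (Fin.last (n+3))).zip
            ((Fin.snoc u v : Fin (n+4) → List Γ) 0))) (dv, c) ∈ A.accept
          rw [Fin.snoc_last, snoc_zero', hu0]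
          rw [← sim_concat_iff A sim hlen hrec hvsim hττ, hvi]
          exact hv'
        · have hsv : (Fin.snoc u' v' : Fin (n+4) → List Γ) =
              fun i => (Fin.snoc u v : Fin (n+4) → List Γ) i ++ [(Fin.snoc d dv : Fin (n+4) → Γ) i] := by
            rw [hu'eq, ← hvi]; exact snoc_append u v d dv
          rw [hsv]
          refine tp_update A _ _ τ.length ?_
          intro i
          induction i using Fin.lastCases with
          | last => simp only [Fin.snoc_last]; exact hlen _ _ hvsim
          | cast i => simp only [Fin.snoc_castSucc]; exact hLu i
      · rintro ⟨s, ⟨v, hvsim, rfl⟩, dv, hacc, rfl⟩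
        rw [hu0] at hvsim
        have haccsim : sim (v ++ [dv]) (τ ++ [c]) := by
          rw [sim_concat_iff A sim hlen hrec hvsim hττ]
          have h5 : A.eval (((Fin.snoc u v : Fin (n+4) → List Γ) (Fin.last (n+3))).zip
              ((Fin.snoc u v : Fin (n+4) → List Γ) 0)) = A.eval (v.zip τ) := by
            rw [Fin.snoc_last, snoc_zero', hu0]
          have hacc' : A.step (A.eval (v.zip τ)) (dv, c) ∈ A.accept := h5 ▸ hacc
          exact hacc'
        refine ⟨v ++ [dv], by rwa [h0], ?_⟩
        have hsv : (Fin.snoc u' (v ++ [dv]) : Fin (n+4) → List Γ) =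
            fun i => (Fin.snoc u v : Fin (n+4) → List Γ) i ++ [(Fin.snoc d dv : Fin (n+4) → Γ) i] := by
          rw [hu'eq]; exact snoc_append u v d dv
        rw [hsv]
        refine (tp_update A _ _ τ.length ?_).symm
        intro i
        induction i using Fin.lastCases with
        | last => simp only [Fin.snoc_last]; exact hlen _ _ hvsim
        | cast i => simp only [Fin.snoc_castSucc]; exact hLu i
  · rintro ⟨t, E, ⟨u, h0, hsim, hEq⟩, d, hd0, hacc, rfl⟩
    rw [Prod.mk.injEq] at hEq
    obtain ⟨ht, hE⟩ := hEq
    subst ht; subst hE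
    have hLu : ∀ i, (u i).length = τ.length := fun i => hlen _ _ (hsim i)
    have husim' : ∀ i, sim (u i ++ [d i]) (τ ++ [c]) := by
      intro i
      rw [sim_concat_iff A sim hlen hrec (hsim i) hττ]
      have h' : A.step (A.eval ((u i).zip (u 0))) (d i, c) ∈ A.accept := hacc i
      rwa [h0] at h'
    refine ⟨fun i => u i ++ [d i], by show u 0 ++ [d 0] = τ ++ [c]; rw [h0, hd0], husim', ?_⟩
    have h1 : tpOf A (fun i => u i ++ [d i]) = tpu A (tpOf A u) d := tp_update A u d τ.length hLu
    have h2 : extSet A sim n (fun i => u i ++ [d i]) =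
        {s' | ∃ s ∈ extSet A sim n u, ∃ dv : Γ,
          A.step (s.1 (Fin.last (n+3)) 0) (dv, c) ∈ A.accept ∧
          s' = tpu A s (Fin.snoc d dv)} := by
      ext s'
      constructor
      · rintro ⟨v', hv', rfl⟩
        have hv'' : sim v' (τ ++ [c]) := by
          have h6 : (fun i => u i ++ [d i]) (0 : Fin (n+3)) = τ ++ [c] := by
            show u 0 ++ [d 0] = τ ++ [c]; rw [h0, hd0]
          rwa [h6] at hv'
        have hvne : v' ≠ [] := by
          intro hcon
          have := hlen _ _ hv''
          rw [hcon] at this; simp at this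
        set v := v'.dropLast with hv
        set dv := v'.getLast hvne with hdv
        have hvi : v ++ [dv] = v' := List.dropLast_append_getLast hvne
        have hvsim : sim v τ := by
          have := sim_dropLast sim hlen hpre hv'' hvne
          rwa [List.dropLast_concat] at this
        refine ⟨tpOf A (Fin.snoc u v : Fin (n+4) → List Γ), ⟨v, by rwa [h0], rfl⟩, dv, ?_, ?_⟩
        · show A.step (A.eval (((Fin.snoc u v : Fin (n+4) → List Γ) (Fin.last (n+3))).zip
            ((Fin.snoc u v : Fin (n+4) → List Γ) 0))) (dv, c) ∈ A.accept
          rw [Fin.snoc_last, snoc_zero', h0]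
          rw [← sim_concat_iff A sim hlen hrec hvsim hττ, hvi]
          exact hv''
        · have hsv : (Fin.snoc (fun i => u i ++ [d i]) v' : Fin (n+4) → List Γ) =
              fun i => (Fin.snoc u v : Fin (n+4) → List Γ) i ++ [(Fin.snoc d dv : Fin (n+4) → Γ) i] := by
            rw [← hvi]; exact snoc_append u v d dv
          rw [hsv]
          refine tp_update A _ _ τ.length ?_
          intro i
          induction i using Fin.lastCases with
          | last => simp only [Fin.snoc_last]; exact hlen _ _ hvsim
          | cast i => simp only [Fin.snoc_castSucc]; exact hLu i
      · rintro ⟨s, ⟨v, hv, rfl⟩, dv, hacc2, rfl⟩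
        rw [h0] at hv
        have hvdv : sim (v ++ [dv]) (τ ++ [c]) := by
          rw [sim_concat_iff A sim hlen hrec hv hττ]
          have h5 : A.eval (((Fin.snoc u v : Fin (n+4) → List Γ) (Fin.last (n+3))).zip
              ((Fin.snoc u v : Fin (n+4) → List Γ) 0)) = A.eval (v.zip τ) := by
            rw [Fin.snoc_last, snoc_zero', h0]
          exact h5 ▸ hacc2
        refine ⟨v ++ [dv], ?_, ?_⟩
        · have h6 : (fun i => u i ++ [d i]) (0 : Fin (n+3)) = τ ++ [c] := by
            show u 0 ++ [d 0] = τ ++ [c]; rw [h0, hd0]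
          rwa [h6]
        · have hsv : (Fin.snoc (fun i => u i ++ [d i]) (v ++ [dv]) : Fin (n+4) → List Γ) =
              fun i => (Fin.snoc u v : Fin (n+4) → List Γ) i ++ [(Fin.snoc d dv : Fin (n+4) → Γ) i] :=
            snoc_append u v d dv
          rw [hsv]
          refine (tp_update A _ _ τ.length ?_).symm
          intro i
          induction i using Fin.lastCases with
          | last => simp only [Fin.snoc_last]; exact hlen _ _ hv
          | cast i => simp only [Fin.snoc_castSucc]; exact hLu i
    rw [h1, h2]

theorem state_eq (hequiv : Equivalence sim)
    (hlen : ∀ τ τ', sim τ τ' → τ.length = τ'.length)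
    (hpre : ∀ τ τ' ρ ρ' : List Γ, sim τ τ' → ρ <+: τ → ρ' <+: τ' →
      ρ.length = ρ'.length → sim ρ ρ')
    (hrec : ∀ τ τ' : List Γ, τ.length = τ'.length →
      (sim τ τ' ↔ List.zip τ τ' ∈ A.accepts)) (τ : List Γ) :
    List.foldl (updQ A n) (Φ A sim n []) τ = Φ A sim n τ := by
  induction τ using List.reverseRecOn with
  | nil => rfl
  | append_singleton x c ih =>
    rw [List.foldl_append, List.foldl_cons, List.foldl_nil, ih,
      ← Phi_concat A sim n hequiv hlen hpre hrec]

theorem sim_concat_decomp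
    (hlen : ∀ τ τ', sim τ τ' → τ.length = τ'.length)
    (hpre : ∀ τ τ' ρ ρ' : List Γ, sim τ τ' → ρ <+: τ → ρ' <+: τ' →
      ρ.length = ρ'.length → sim ρ ρ') {z w : List Γ} {cw : Γ}
    (h : sim z (w ++ [cw])) : ∃ v a, z = v ++ [a] ∧ sim v w := by
  have hne : z ≠ [] := by
    intro h'
    have := hlen _ _ h
    rw [h'] at this; simp at this
  refine ⟨z.dropLast, z.getLast hne, (List.dropLast_append_getLast hne).symm, ?_⟩
  have := sim_dropLast sim hlen hpre h hne
  rwa [List.dropLast_concat] at this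

/-- The minimal encoding value of a class. -/
noncomputable def mval (C : Set (List Γ)) : ℕ := sInf (val '' C)

/-- The canonical rank of the class of `τ ++ [c]` among the successor classes
of the class of `τ`. -/
noncomputable def rank (τ : List Γ) (c : Γ) : ℕ :=
  {C | C ∈ succs sim τ ∧ mval C < mval (cls sim (τ ++ [c]))}.ncard

def oLT (o : Ordering) (a a' : Γ) : Prop := o = .lt ∨ (o = .eq ∧ ordΓ a < ordΓ a')

theorem oLT_iff (x y : List Γ) (a a' : Γ) :
    oLT (compare (val x) (val y)) a a' ↔ val (x ++ [a]) < val (y ++ [a']) := by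
  unfold oLT
  rw [val_concat_lt_iff, compare_lt_iff_lt, compare_eq_iff_eq]

/-- The defining property used to read off the rank from a machine state. -/
def PP (S : QT σ n) (c : Γ) (j : ℕ) : Prop :=
  ∃ t E, (t, E) ∈ S ∧ ∃ d : Fin (n+3) → Γ,
    A.step (t.1 1 0) (d 1, c) ∈ A.accept ∧
    (∀ s ∈ E, ∀ dv : Γ, A.step (s.1 (Fin.last (n+3)) 0) (dv, c) ∈ A.accept →
      ¬ oLT (s.2 (Fin.last (n+3)) 1) dv (d 1)) ∧
    (∀ i : Fin (n+3), 2 ≤ (i : ℕ) → (i : ℕ) ≤ j + 1 →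
      (A.step (t.1 i 1) (d i, d 1) ∉ A.accept) ∧ oLT (t.2 i 1) (d i) (d 1) ∧
      (∀ i' : Fin (n+3), 2 ≤ (i' : ℕ) → (i' : ℕ) ≤ j + 1 → i ≠ i' →
        A.step (t.1 i i') (d i, d i') ∉ A.accept))

noncomputable def extract (S : QT σ n) (c : Γ) : ℕ := sSup {j | j ≤ n ∧ PP A n S c j}

theorem extract_eq (hequiv : Equivalence sim)
    (hlen : ∀ τ τ', sim τ τ' → τ.length = τ'.length)
    (hpre : ∀ τ τ' ρ ρ' : List Γ, sim τ τ' → ρ <+: τ → ρ' <+: τ' →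
      ρ.length = ρ'.length → sim ρ ρ')
    (hrec : ∀ τ τ' : List Γ, τ.length = τ'.length →
      (sim τ τ' ↔ List.zip τ τ' ∈ A.accepts))
    (hbr : ∀ τ : List Γ, (succs sim τ).ncard ≤ n) (τ : List Γ) (c : Γ) :
    extract A n (Φ A sim n τ) c = rank sim τ c := by
  classical
  have hττ : sim τ τ := hequiv.refl τ
  set m0 := mval (cls sim (τ ++ [c])) with hm0def
  set Sset := {C | C ∈ succs sim τ ∧ mval C < m0} with hSdef
  have hfin_succ : (succs sim τ).Finite := succs_finite hlen τ
  have hfinS : Sset.Finite := hfin_succ.subset (fun C hC => hC.1)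
  have hrank : rank sim τ c = Sset.ncard := rfl
  have hrle : Sset.ncard ≤ n :=
    le_trans (Set.ncard_le_ncard (fun C hC => hC.1) hfin_succ) (hbr τ)
  have partA : ∀ j, j ≤ n → PP A n (Φ A sim n τ) c j → j ≤ Sset.ncard := by
    intro j hjn hPP
    obtain ⟨t, E, hTE, d, hacc1, hmin, hcond⟩ := hPP
    obtain ⟨u, h0, hsim, hEq⟩ := hTE
    rw [Prod.mk.injEq] at hEq
    obtain ⟨ht, hE⟩ := hEq
    subst ht; subst hE
    have hz0 : sim (u 1 ++ [d 1]) (τ ++ [c]) := by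
      rw [sim_concat_iff A sim hlen hrec (hsim 1) hττ]
      have h' : A.step (A.eval ((u 1).zip (u 0))) (d 1, c) ∈ A.accept := hacc1
      rwa [h0] at h'
    have hm0 : m0 = val (u 1 ++ [d 1]) := by
      apply le_antisymm
      · exact Nat.sInf_le ⟨u 1 ++ [d 1], hz0, rfl⟩
      · have hne : (cls sim (τ ++ [c])).Nonempty := ⟨τ ++ [c], hequiv.refl _⟩
        obtain ⟨z, hz, hzval⟩ := Nat.sInf_mem (hne.image val)
        obtain ⟨v, dv, rfl, hvsim'⟩ := sim_concat_decomp sim hlen hpre hz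
        have hsmem : tpOf A (Fin.snoc u v : Fin (n+4) → List Γ) ∈ extSet A sim n u :=
          ⟨v, by rwa [h0], rfl⟩
        have hsacc : A.step ((tpOf A (Fin.snoc u v : Fin (n+4) → List Γ)).1
            (Fin.last (n+3)) 0) (dv, c) ∈ A.accept := by
          show A.step (A.eval (((Fin.snoc u v : Fin (n+4) → List Γ) (Fin.last (n+3))).zip
            ((Fin.snoc u v : Fin (n+4) → List Γ) 0))) (dv, c) ∈ A.accept
          rw [Fin.snoc_last, snoc_zero', h0]
          rw [← sim_concat_iff A sim hlen hrec hvsim' hττ]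
          exact hz
        have hconc := hmin _ hsmem dv hsacc
        have hrw : (tpOf A (Fin.snoc u v : Fin (n+4) → List Γ)).2 (Fin.last (n+3)) 1 =
            compare (val v) (val (u 1)) := by
          show compare (val ((Fin.snoc u v : Fin (n+4) → List Γ) (Fin.last (n+3))))
            (val ((Fin.snoc u v : Fin (n+4) → List Γ) 1)) = _
          rw [Fin.snoc_last, snoc_one']
        rw [hrw, oLT_iff] at hconc
        have hval : m0 = val (v ++ [dv]) := by rw [hm0def]; exact hzval.symm
        rw [hval]
        omega
    have hCmem : ∀ i : Fin (n+3), 2 ≤ (i : ℕ) → (i : ℕ) ≤ j + 1 →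
        cls sim (u i ++ [d i]) ∈ Sset := by
      intro i h2 h3
      obtain ⟨hb1, hc1, _⟩ := hcond i h2 h3
      refine ⟨⟨u i, d i, hsim i, rfl⟩, ?_⟩
      have hrw : (tpOf A u).2 i 1 = compare (val (u i)) (val (u 1)) := rfl
      rw [hrw, oLT_iff] at hc1
      calc mval (cls sim (u i ++ [d i])) ≤ val (u i ++ [d i]) :=
            Nat.sInf_le ⟨_, hequiv.refl _, rfl⟩
        _ < val (u 1 ++ [d 1]) := hc1
        _ = m0 := hm0.symm
    have hCne : ∀ (i i' : Fin (n+3)), 2 ≤ (i : ℕ) → (i : ℕ) ≤ j + 1 → 2 ≤ (i' : ℕ) →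
        (i' : ℕ) ≤ j + 1 → i ≠ i' → cls sim (u i ++ [d i]) ≠ cls sim (u i' ++ [d i']) := by
      intro i i' h2 h3 h2' h3' hii heq
      have hmm : sim (u i ++ [d i]) (u i' ++ [d i']) := by
        have h' := mem_cls_self hequiv (u i ++ [d i])
        rw [heq] at h'
        exact h'
      rw [sim_concat_iff A sim hlen hrec (hsim i) (hsim i')] at hmm
      exact (hcond i h2 h3).2.2 i' h2' h3' hii hmm
    haveI : Finite ↥Sset := hfinS.to_subtype
    have hGm : ∀ k : Fin j, ((k : ℕ) + 2) < n + 3 := fun k => by have := k.isLt; omega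
    set G : Fin j → ↥Sset := fun k =>
      ⟨cls sim (u ⟨(k : ℕ) + 2, hGm k⟩ ++ [d ⟨(k : ℕ) + 2, hGm k⟩]),
        hCmem _ (by show 2 ≤ (k : ℕ) + 2; omega)
          (by show (k : ℕ) + 2 ≤ j + 1; have := k.isLt; omega)⟩ with hGdef
    have hGinj : Function.Injective G := by
      intro k k' hkk
      by_contra hkk'
      refine hCne ⟨(k : ℕ) + 2, hGm k⟩ ⟨(k' : ℕ) + 2, hGm k'⟩
        (by show 2 ≤ (k : ℕ) + 2; omega)
        (by show (k : ℕ) + 2 ≤ j + 1; have := k.isLt; omega)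
        (by show 2 ≤ (k' : ℕ) + 2; omega)
        (by show (k' : ℕ) + 2 ≤ j + 1; have := k'.isLt; omega) ?_ ?_
      · simp only [ne_eq, Fin.mk.injEq]
        intro h'
        exact hkk' (Fin.ext (by omega))
      · exact congrArg Subtype.val hkk
    calc j = Nat.card (Fin j) := by simp [Nat.card_eq_fintype_card]
      _ ≤ Nat.card ↥Sset := Nat.card_le_card_of_injective G hGinj
      _ = Sset.ncard := Nat.card_coe_set_eq Sset
  have partB : PP A n (Φ A sim n τ) c Sset.ncard := by
    set r := Sset.ncard with hrdef
    have hne0 : (cls sim (τ ++ [c])).Nonempty := ⟨τ ++ [c], hequiv.refl _⟩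
    obtain ⟨z0, hz0mem, hz0val⟩ := Nat.sInf_mem (hne0.image val)
    obtain ⟨v0, a0, rfl, hv0sim⟩ := sim_concat_decomp sim hlen hpre hz0mem
    haveI : Finite ↥Sset := hfinS.to_subtype
    haveI := hfinS.fintype
    have hcard : Fintype.card ↥Sset = r := by
      rw [← Nat.card_eq_fintype_card, Nat.card_coe_set_eq]
    set e : Fin r → ↥Sset := ⇑(Fintype.equivFinOfCardEq hcard).symm with hedef
    have einj : Function.Injective e := (Fintype.equivFinOfCardEq hcard).symm.injective
    have hwit : ∀ k : Fin r, ∃ v a, sim v τ ∧ (v ++ [a]) ∈ (e k : Set (List Γ)) ∧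
        val (v ++ [a]) = mval (e k : Set (List Γ)) := by
      intro k
      obtain ⟨hsucc, hlt⟩ := (e k).2
      obtain ⟨w, cw, hwsim, hCeq⟩ := hsucc
      have hCne : (e k : Set (List Γ)).Nonempty := by
        rw [hCeq]; exact ⟨w ++ [cw], hequiv.refl _⟩
      obtain ⟨z, hzmem, hzval⟩ := Nat.sInf_mem (hCne.image val)
      have hzsim : sim z (w ++ [cw]) := by rw [hCeq] at hzmem; exact hzmem
      obtain ⟨v, a, rfl, hvw⟩ := sim_concat_decomp sim hlen hpre hzsim
      exact ⟨v, a, hequiv.trans hvw hwsim, hzmem, hzval⟩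
    choose vv aa hvsim hvmem hvval using hwit
    have hclsk : ∀ k : Fin r, cls sim (vv k ++ [aa k]) = (e k : Set (List Γ)) := by
      intro k
      obtain ⟨hsucc, hlt⟩ := (e k).2
      obtain ⟨w, cw, hwsim, hCeq⟩ := hsucc
      have h := hvmem k
      rw [hCeq] at h ⊢
      exact cls_eq_of_mem hequiv h
    set u : Fin (n+3) → List Γ := fun i =>
      if h : 2 ≤ (i : ℕ) ∧ (i : ℕ) ≤ r + 1 then vv ⟨(i : ℕ) - 2, by omega⟩
      else if (i : ℕ) = 1 then v0 else τ with hudef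
    set d : Fin (n+3) → Γ := fun i =>
      if h : 2 ≤ (i : ℕ) ∧ (i : ℕ) ≤ r + 1 then aa ⟨(i : ℕ) - 2, by omega⟩
      else if (i : ℕ) = 1 then a0 else c with hddef
    have hu0 : u 0 = τ := by simp [hudef]
    have hu1 : u 1 = v0 := by simp [hudef]
    have hd1 : d 1 = a0 := by simp [hddef]
    have hur : ∀ (i : Fin (n+3)) (h2 : 2 ≤ (i : ℕ)) (h3 : (i : ℕ) ≤ r + 1),
        u i = vv ⟨(i : ℕ) - 2, by omega⟩ ∧ d i = aa ⟨(i : ℕ) - 2, by omega⟩ := by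
      intro i h2 h3
      constructor
      · simp only [hudef]
        rw [dif_pos ⟨h2, h3⟩]
      · simp only [hddef]
        rw [dif_pos ⟨h2, h3⟩]
    have husim : ∀ i, sim (u i) τ := by
      intro i
      simp only [hudef]
      split_ifs with h1 h2
      · exact hvsim _
      · exact hv0sim
      · exact hττ
    have hval0 : val (v0 ++ [a0]) = m0 := by rw [hm0def]; exact hz0val
    refine ⟨tpOf A u, extSet A sim n u, ⟨u, hu0, husim, rfl⟩, d, ?_, ?_, ?_⟩
    · show A.step (A.eval ((u 1).zip (u 0))) (d 1, c) ∈ A.accept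
      rw [hu0, hu1, hd1, ← sim_concat_iff A sim hlen hrec hv0sim hττ]
      exact hz0mem
    · rintro s ⟨v, hv, rfl⟩ dv hacc
      rw [hu0] at hv
      have hsimvd : sim (v ++ [dv]) (τ ++ [c]) := by
        rw [sim_concat_iff A sim hlen hrec hv hττ]
        have h5 : A.eval (((Fin.snoc u v : Fin (n+4) → List Γ) (Fin.last (n+3))).zip
            ((Fin.snoc u v : Fin (n+4) → List Γ) 0)) = A.eval (v.zip τ) := by
          rw [Fin.snoc_last, snoc_zero', hu0]
        exact h5 ▸ hacc
      have hge : val (v0 ++ [a0]) ≤ val (v ++ [dv]) := by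
        rw [hz0val]
        exact Nat.sInf_le ⟨v ++ [dv], hsimvd, rfl⟩
      have hrw : (tpOf A (Fin.snoc u v : Fin (n+4) → List Γ)).2 (Fin.last (n+3)) 1 =
          compare (val v) (val (u 1)) := by
        show compare (val ((Fin.snoc u v : Fin (n+4) → List Γ) (Fin.last (n+3))))
          (val ((Fin.snoc u v : Fin (n+4) → List Γ) 1)) = _
        rw [Fin.snoc_last, snoc_one']
      rw [hrw, hu1, hd1, oLT_iff]
      omega
    · intro i h2 h3
      obtain ⟨hui, hdi⟩ := hur i h2 h3
      set k : Fin r := ⟨(i : ℕ) - 2, by omega⟩ with hkdef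
      refine ⟨?_, ?_, ?_⟩
      · show A.step (A.eval ((u i).zip (u 1))) (d i, d 1) ∉ A.accept
        rw [← sim_concat_iff A sim hlen hrec (husim i) (husim 1), hui, hdi, hu1, hd1]
        intro hcon
        have h7 : (vv k ++ [aa k]) ∈ cls sim (τ ++ [c]) := hequiv.trans hcon hz0mem
        have h8 : cls sim (vv k ++ [aa k]) = cls sim (τ ++ [c]) := cls_eq_of_mem hequiv h7
        have hlt := (e k).2.2
        rw [← hclsk k, h8, ← hm0def] at hlt
        exact lt_irrefl _ hlt
      · have hrw : (tpOf A u).2 i 1 = compare (val (u i)) (val (u 1)) := rfl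
        rw [hrw, oLT_iff, hui, hdi, hu1, hd1, hvval k, hval0]
        exact (e k).2.2
      · intro i' h2' h3' hii
        obtain ⟨hui', hdi'⟩ := hur i' h2' h3'
        show A.step (A.eval ((u i).zip (u i'))) (d i, d i') ∉ A.accept
        rw [← sim_concat_iff A sim hlen hrec (husim i) (husim i'), hui, hdi, hui', hdi']
        intro hcon
        set k' : Fin r := ⟨(i' : ℕ) - 2, by omega⟩ with hk'def
        have hee : (e k : Set (List Γ)) = (e k' : Set (List Γ)) := by
          rw [← hclsk k, ← hclsk k']
          exact cls_eq_of_sim hequiv hcon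
        have hkeq : k = k' := einj (Subtype.ext hee)
        apply hii
        apply Fin.ext
        have hkv : ((i : ℕ) - 2) = ((i' : ℕ) - 2) := congrArg Fin.val hkeq
        omega
  rw [hrank]
  unfold extract
  apply le_antisymm
  · exact csSup_le ⟨Sset.ncard, hrle, partB⟩ (fun j hj => partA j hj.1 hj.2)
  · exact le_csSup ⟨n, fun j hj => hj.1⟩ ⟨hrle, partB⟩

theorem rank_le (hlen : ∀ τ τ', sim τ τ' → τ.length = τ'.length)
    (hbr : ∀ τ : List Γ, (succs sim τ).ncard ≤ n) (τ : List Γ) (c : Γ) :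
    rank sim τ c ≤ n :=
  le_trans (Set.ncard_le_ncard (fun C hC => hC.1) (succs_finite hlen τ)) (hbr τ)

theorem rank_congr (hequiv : Equivalence sim) {x x' : List Γ} {c c' : Γ}
    (hxx' : sim x x') (hcc : sim (x ++ [c]) (x' ++ [c'])) :
    rank sim x c = rank sim x' c' := by
  unfold rank
  rw [succs_eq_of_sim hequiv hxx', cls_eq_of_sim hequiv hcc]

theorem rank_inj (hequiv : Equivalence sim)
    (hlen : ∀ τ τ', sim τ τ' → τ.length = τ'.length) {x x' : List Γ} {c c' : Γ}
    (hxx' : sim x x') (h : rank sim x c = rank sim x' c') :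
    sim (x ++ [c]) (x' ++ [c']) := by
  set C₁ := cls sim (x ++ [c]) with hC1def
  set C₂ := cls sim (x' ++ [c']) with hC2def
  have hC1 : C₁ ∈ succs sim x := ⟨x, c, hequiv.refl x, rfl⟩
  have hC2 : C₂ ∈ succs sim x := ⟨x', c', hequiv.symm hxx', rfl⟩
  have hfs : (succs sim x).Finite := succs_finite hlen x
  have hr' : rank sim x' c' = {C | C ∈ succs sim x ∧ mval C < mval C₂}.ncard := by
    unfold rank
    rw [succs_eq_of_sim hequiv (hequiv.symm hxx')]
  have hr : rank sim x c = {C | C ∈ succs sim x ∧ mval C < mval C₁}.ncard := rfl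
  rcases lt_trichotomy (mval C₁) (mval C₂) with hlt | heq | hgt
  · exfalso
    have hsubset : {C | C ∈ succs sim x ∧ mval C < mval C₁} ⊆
        {C | C ∈ succs sim x ∧ mval C < mval C₂} := by
      rintro C ⟨h1, h2⟩; exact ⟨h1, lt_trans h2 hlt⟩
    have hss : {C | C ∈ succs sim x ∧ mval C < mval C₁} ⊂
        {C | C ∈ succs sim x ∧ mval C < mval C₂} :=
      (Set.ssubset_iff_of_subset hsubset).mpr
        ⟨C₁, ⟨hC1, hlt⟩, fun hcon => lt_irrefl _ hcon.2⟩
    have := Set.ncard_lt_ncard hss (hfs.subset (fun C hC => hC.1))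
    rw [← hr, ← hr'] at this
    omega
  · have hne1 : C₁.Nonempty := ⟨x ++ [c], hequiv.refl _⟩
    have hne2 : C₂.Nonempty := ⟨x' ++ [c'], hequiv.refl _⟩
    obtain ⟨z1, hz1, hv1⟩ := Nat.sInf_mem (hne1.image val)
    obtain ⟨z2, hz2, hv2⟩ := Nat.sInf_mem (hne2.image val)
    have hvz : val z1 = val z2 := by rw [hv1, hv2]; exact heq
    have hlz : z1.length = z2.length := by
      have e1 := hlen _ _ hz1
      have e2 := hlen _ _ hz2
      have e3 := hlen _ _ hxx'
      simp only [List.length_append, List.length_singleton] at e1 e2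
      omega
    have hzz : z1 = z2 := val_inj z1 z2 hlz hvz
    subst hzz
    exact hequiv.trans (hequiv.symm hz1) hz2
  · exfalso
    have hsubset : {C | C ∈ succs sim x ∧ mval C < mval C₂} ⊆
        {C | C ∈ succs sim x ∧ mval C < mval C₁} := by
      rintro C ⟨h1, h2⟩; exact ⟨h1, lt_trans h2 hgt⟩
    have hss : {C | C ∈ succs sim x ∧ mval C < mval C₂} ⊂
        {C | C ∈ succs sim x ∧ mval C < mval C₁} :=
      (Set.ssubset_iff_of_subset hsubset).mpr
        ⟨C₂, ⟨hC2, hgt⟩, fun hcon => lt_irrefl _ hcon.2⟩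
    have := Set.ncard_lt_ncard hss (hfs.subset (fun C hC => hC.1))
    rw [← hr, ← hr'] at this
    omega

/-- The output function of the constructed Mealy machine. -/
noncomputable def lamF (S : QT σ n) (c : Γ) : Fin (n+1) :=
  ⟨min n (extract A n S c), by omega⟩

open Classical in
/-- The constructed observation function. -/
noncomputable def βF (τ : List Γ) : Fin (n+1) :=
  if h : τ = [] then ⟨0, by omega⟩
  else lamF A n (List.foldl (updQ A n) (Φ A sim n []) τ.dropLast) (τ.getLast h)

theorem βF_concat (hequiv : Equivalence sim)
    (hlen : ∀ τ τ', sim τ τ' → τ.length = τ'.length)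
    (hpre : ∀ τ τ' ρ ρ' : List Γ, sim τ τ' → ρ <+: τ → ρ' <+: τ' →
      ρ.length = ρ'.length → sim ρ ρ')
    (hrec : ∀ τ τ' : List Γ, τ.length = τ'.length →
      (sim τ τ' ↔ List.zip τ τ' ∈ A.accepts))
    (hbr : ∀ τ : List Γ, (succs sim τ).ncard ≤ n) (x : List Γ) (c : Γ) :
    (βF A sim n (x ++ [c]) : ℕ) = rank sim x c := by
  unfold βF
  rw [dif_neg (by simp)]
  unfold lamF
  show min n (extract A n (List.foldl (updQ A n) (Φ A sim n []) (x ++ [c]).dropLast)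
      ((x ++ [c]).getLast (by simp))) = rank sim x c
  rw [List.dropLast_concat, state_eq A sim n hequiv hlen hpre hrec,
    show (x ++ [c]).getLast (by simp) = c from List.getLast_concat,
    extract_eq A sim n hequiv hlen hpre hrec hbr]
  exact min_eq_right (rank_le sim n hlen hbr x c)

theorem βF_congr (hequiv : Equivalence sim)
    (hlen : ∀ τ τ', sim τ τ' → τ.length = τ'.length)
    (hpre : ∀ τ τ' ρ ρ' : List Γ, sim τ τ' → ρ <+: τ → ρ' <+: τ' →
      ρ.length = ρ'.length → sim ρ ρ')
    (hrec : ∀ τ τ' : List Γ, τ.length = τ'.length →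
      (sim τ τ' ↔ List.zip τ τ' ∈ A.accepts))
    (hbr : ∀ τ : List Γ, (succs sim τ).ncard ≤ n) {ρ ρ' : List Γ} (h : sim ρ ρ') :
    βF A sim n ρ = βF A sim n ρ' := by
  rcases List.eq_nil_or_concat ρ with rfl | ⟨x, c, hρ⟩
  · have h0 : ρ'.length = 0 := by
      have := hlen _ _ h; simpa using this.symm
    rw [List.length_eq_zero_iff.mp h0]
  · rw [List.concat_eq_append] at hρ
    subst hρ
    rcases List.eq_nil_or_concat ρ' with rfl | ⟨x', c', hρ'⟩
    · exfalso
      have := hlen _ _ h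
      simp at this
    · rw [List.concat_eq_append] at hρ'
      subst hρ'
      have hxx' : sim x x' := by
        have h2 := sim_dropLast sim hlen hpre h (by simp)
        rwa [List.dropLast_concat, List.dropLast_concat] at h2
      apply Fin.ext
      rw [βF_concat A sim n hequiv hlen hpre hrec hbr,
        βF_concat A sim n hequiv hlen hpre hrec hbr]
      exact rank_congr sim hequiv hxx' h

theorem kernel_iff (hequiv : Equivalence sim)
    (hlen : ∀ τ τ', sim τ τ' → τ.length = τ'.length)
    (hpre : ∀ τ τ' ρ ρ' : List Γ, sim τ τ' → ρ <+: τ → ρ' <+: τ' →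
      ρ.length = ρ'.length → sim ρ ρ')
    (hrec : ∀ τ τ' : List Γ, τ.length = τ'.length →
      (sim τ τ' ↔ List.zip τ τ' ∈ A.accepts))
    (hbr : ∀ τ : List Γ, (succs sim τ).ncard ≤ n) (τ τ' : List Γ) :
    obsHist (βF A sim n) τ = obsHist (βF A sim n) τ' ↔ sim τ τ' := by
  constructor
  · intro h
    induction τ using List.reverseRecOn generalizing τ' with
    | nil =>
      have h0 : τ'.length = 0 := by
        have := congrArg List.length h
        rw [obsHist_length, obsHist_length] at this
        simpa using this.symm
      rw [List.length_eq_zero_iff.mp h0]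
      exact hequiv.refl []
    | append_singleton x c ih =>
      rcases List.eq_nil_or_concat τ' with rfl | ⟨x', c', hτ'⟩
      · exfalso
        have := congrArg List.length h
        rw [obsHist_length, obsHist_length] at this
        simp at this
      · rw [List.concat_eq_append] at hτ'
        subst hτ'
        rw [obsHist_concat, obsHist_concat] at h
        have hlf : (obsHist (βF A sim n) x).length = (obsHist (βF A sim n) x').length := by
          have := congrArg List.length h
          simp only [List.length_append, List.length_singleton] at this
          omega
        obtain ⟨h1, h2⟩ := List.append_inj h hlf
        have hxx' : sim x x' := ih x' h1
        have hβ : βF A sim n (x ++ [c]) = βF A sim n (x' ++ [c']) := by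
          simpa using h2
        have hrk : rank sim x c = rank sim x' c' := by
          have hv : (βF A sim n (x ++ [c]) : ℕ) = (βF A sim n (x' ++ [c']) : ℕ) := by
            rw [hβ]
          rwa [βF_concat A sim n hequiv hlen hpre hrec hbr,
            βF_concat A sim n hequiv hlen hpre hrec hbr] at hv
        exact rank_inj sim hequiv hlen hxx' hrk
  · intro h
    have hL : τ.length = τ'.length := hlen _ _ h
    unfold obsHist
    rw [hL]
    apply List.map_congr_left
    intro i hi
    rw [List.mem_range] at hi
    apply βF_congr A sim n hequiv hlen hpre hrec hbr
    apply hpre τ τ' _ _ h (List.take_prefix _ _) (List.take_prefix _ _)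
    rw [List.length_take, List.length_take, hL]

end Part2


end MealyChar

/-- characterisation theorem: a regular indistinguishability
relation admits a representation by a finite-state (Mealy) observation function
if and only if its information tree has bounded branching. -/
theorem mealy_representation_iff_bounded_branching {Γ σ : Type*}
    [Fintype Γ] [Nonempty Γ] [Fintype σ] (A : DFA (Γ × Γ) σ)
    (sim : List Γ → List Γ → Prop)
    (hequiv : Equivalence sim)
    (hlen : ∀ τ τ', sim τ τ' → τ.length = τ'.length)
    (hpre : ∀ τ τ' ρ ρ' : List Γ, sim τ τ' → ρ <+: τ → ρ' <+: τ' →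
      ρ.length = ρ'.length → sim ρ ρ')
    (hrec : ∀ τ τ' : List Γ, τ.length = τ'.length →
      (sim τ τ' ↔ List.zip τ τ' ∈ A.accepts)) :
    -- (i) there is a Mealy automaton defining an observation function with kernel `sim`
    (∃ (Q : Type) (_ : Fintype Q) (Ob : Type) (_ : Fintype Ob)
        (δ : Q → Γ → Q) (q₀ : Q) (lam : Q → Γ → Ob) (β : List Γ → Ob),
        (∀ (τ : List Γ) (c : Γ), β (τ ++ [c]) = lam (List.foldl δ q₀ τ) c) ∧
        (∀ τ τ' : List Γ, obsHist β τ = obsHist β τ' ↔ sim τ τ')) ↔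
    -- (ii) the information tree of `sim` has bounded branching
    (∃ n : ℕ, ∀ τ : List Γ,
      {C : Set (List Γ) | ∃ (τ' : List Γ) (c : Γ), sim τ' τ ∧
        C = {x | sim x (τ' ++ [c])}}.Finite ∧
      {C : Set (List Γ) | ∃ (τ' : List Γ) (c : Γ), sim τ' τ ∧
        C = {x | sim x (τ' ++ [c])}}.ncard ≤ n) := by
  constructor
  · rintro ⟨Q, _, Ob, _, δ, q₀, lam, β, hβ, hker⟩
    refine ⟨Fintype.card Ob, fun τ => ⟨MealyChar.succs_finite hlen τ,
      MealyChar.branching_bound hequiv β hker τ⟩⟩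
  · rintro ⟨n, hbr⟩
    classical
    set eσ := Fintype.equivFin σ with heσ
    set A' : DFA (Γ × Γ) (Fin (Fintype.card σ)) :=
      ⟨fun s a => eσ (A.step (eσ.symm s) a), eσ A.start, eσ.symm ⁻¹' A.accept⟩ with hA'
    have hevalFrom : ∀ (x : List (Γ × Γ)) (s : σ),
        A'.evalFrom (eσ s) x = eσ (A.evalFrom s x) := by
      intro x
      induction x with
      | nil => intro s; rfl
      | cons a y ih =>
        intro s
        show A'.evalFrom (A'.step (eσ s) a) y = eσ (A.evalFrom (A.step s a) y)
        have hstep : A'.step (eσ s) a = eσ (A.step s a) := by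
          show eσ (A.step (eσ.symm (eσ s)) a) = eσ (A.step s a)
          rw [Equiv.symm_apply_apply]
        rw [hstep]
        exact ih (A.step s a)
    have haccepts : ∀ x : List (Γ × Γ), x ∈ A'.accepts ↔ x ∈ A.accepts := by
      intro x
      rw [DFA.mem_accepts, DFA.mem_accepts]
      have hstart : A'.start = eσ A.start := rfl
      show A'.evalFrom A'.start x ∈ A'.accept ↔ _
      rw [hstart, hevalFrom]
      show eσ (A.evalFrom A.start x) ∈ eσ.symm ⁻¹' A.accept ↔ _
      rw [Set.mem_preimage, Equiv.symm_apply_apply]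
      exact Iff.rfl
    have hrec' : ∀ τ τ' : List Γ, τ.length = τ'.length →
        (sim τ τ' ↔ List.zip τ τ' ∈ A'.accepts) :=
      fun τ τ' hh => (hrec τ τ' hh).trans (haccepts _).symm
    have hbr' : ∀ τ : List Γ, (MealyChar.succs sim τ).ncard ≤ n := fun τ => (hbr τ).2
    refine ⟨MealyChar.QT (Fin (Fintype.card σ)) n, Fintype.ofFinite _, Fin (n+1),
      inferInstance, MealyChar.updQ A' n, MealyChar.Φ A' sim n [],
      MealyChar.lamF A' n, MealyChar.βF A' sim n, ?_, ?_⟩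
    · intro τ c
      show MealyChar.βF A' sim n (τ ++ [c]) = _
      unfold MealyChar.βF
      rw [dif_neg (by simp), List.dropLast_concat]
      exact congrArg (MealyChar.lamF A' n _) List.getLast_concat
    · exact fun τ τ' => MealyChar.kernel_iff A' sim n hequiv hlen hpre hrec' hbr' τ τ'
end

section
/- Let Γ be a finite linearly ordered type, σ a finite type, and A : DFA (Γ × Γ) σ a two-tape DFA recognizing an indistinguishability relation ~ on Γ (for equal-length τ, τ': τ ~ τ' ↔ List.zip τ τ' ∈ A.accepts). Then the set of lexicographically least representatives { τ : List Γ | ∀ τ', τ ~ τ' → τ ≤lex τ' } is a regular language: there exist a finite type σ' and a DFA B : DFA Γ σ' whose accepted language is exactly this set. -/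
private lemma lex_concat_iff {α : Type*} (r : α → α → Prop) :
    ∀ (ρ τ : List α), ρ.length = τ.length → ∀ (b a : α),
      (List.Lex r (ρ ++ [b]) (τ ++ [a]) ↔ List.Lex r ρ τ ∨ (ρ = τ ∧ r b a))
  | [], [], _, b, a => by
      constructor
      · intro h
        cases h with
        | rel h => exact Or.inr ⟨rfl, h⟩
        | cons h => cases h
      · rintro (h | ⟨-, h⟩)
        · cases h
        · exact List.Lex.rel h
  | x :: ρ, y :: τ, h, b, a => by
      simp only [List.length_cons, Nat.succ.injEq] at h
      constructor
      · intro hl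
        cases hl with
        | rel h' => exact Or.inl (List.Lex.rel h')
        | cons h' =>
            rcases (lex_concat_iff r ρ τ h b a).mp h' with h'' | ⟨rfl, h''⟩
            · exact Or.inl (List.Lex.cons h'')
            · exact Or.inr ⟨rfl, h''⟩
      · rintro (h' | ⟨heq, h'⟩)
        · cases h' with
          | rel h'' => exact List.Lex.rel h''
          | cons h'' => exact List.Lex.cons ((lex_concat_iff r ρ τ h b a).mpr (Or.inl h''))
        · rw [List.cons.injEq] at heq
          obtain ⟨rfl, rfl⟩ := heq
          exact List.Lex.cons ((lex_concat_iff r ρ ρ rfl b a).mpr (Or.inr ⟨rfl, h'⟩))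
  | [], y :: τ, h, _, _ => by simp at h
  | x :: ρ, [], h, _, _ => by simp at h

/-- for a regular indistinguishability relation, the set of
lexicographically least representatives of the information sets is a regular
language. -/
theorem representatives_regular {Γ σ : Type*} [Fintype Γ] [LinearOrder Γ] [Fintype σ]
    (A : DFA (Γ × Γ) σ) (sim : List Γ → List Γ → Prop)
    (hequiv : Equivalence sim)
    (hlen : ∀ τ τ', sim τ τ' → τ.length = τ'.length)
    (hpre : ∀ τ τ' ρ ρ' : List Γ, sim τ τ' → ρ <+: τ → ρ' <+: τ' →
      ρ.length = ρ'.length → sim ρ ρ')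
    (hrec : ∀ τ τ' : List Γ, τ.length = τ'.length →
      (sim τ τ' ↔ List.zip τ τ' ∈ A.accepts)) :
    ∃ (σ' : Type) (_ : Fintype σ') (B : DFA Γ σ'),
      ∀ τ : List Γ, τ ∈ B.accepts ↔
        (∀ τ' : List Γ, sim τ τ' → (τ = τ' ∨ List.Lex (· < ·) τ τ')) := by
  classical
  set n := Fintype.card σ with hn
  set e : σ ≃ Fin n := Fintype.equivFin σ with he
  refine ⟨Fin n × Set (Fin n), inferInstance, ?_⟩
  set B : DFA Γ (Fin n × Set (Fin n)) :=
    { step := fun p a =>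
        (e (A.step (e.symm p.1) (a, a)),
         {s | (∃ t ∈ p.2, ∃ b, A.step (e.symm t) (a, b) = e.symm s) ∨
              (∃ b, b < a ∧ A.step (e.symm p.1) (a, b) = e.symm s)}),
      start := (e A.start, ∅),
      accept := {p | ∀ s ∈ p.2, e.symm s ∉ A.accept} } with hB
  refine ⟨B, ?_⟩
  have key : ∀ τ : List Γ, B.eval τ =
      (e (A.eval (τ.zip τ)),
       {s | ∃ τ' : List Γ, τ'.length = τ.length ∧ List.Lex (· < ·) τ' τ ∧
            A.eval (τ.zip τ') = e.symm s}) := by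
    intro τ
    induction τ using List.reverseRecOn with
    | nil =>
        have h0 : B.eval [] = B.start := rfl
        rw [h0, hB]
        refine Prod.ext rfl ?_
        simp only
        ext s
        simp only [Set.mem_empty_iff_false, Set.mem_setOf_eq, false_iff]
        rintro ⟨τ', hlen', hlex, -⟩
        have : τ' = [] := List.length_eq_zero_iff.mp (by simpa using hlen')
        subst this
        cases hlex
    | append_singleton τ a ih =>
        rw [DFA.eval_append_singleton, ih]
        have hzip : (τ ++ [a]).zip (τ ++ [a]) = τ.zip τ ++ [(a, a)] :=
          List.zip_append rfl
        refine Prod.ext ?_ ?_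
        · simp only [hB]
          rw [hzip, DFA.eval_append_singleton, Equiv.symm_apply_apply]
        · simp only [hB]
          ext s
          simp only [Set.mem_setOf_eq]
          constructor
          · rintro (⟨t, ⟨τ', hl', hlex', heq'⟩, b, hstep⟩ | ⟨b, hb, hstep⟩)
            · refine ⟨τ' ++ [b], by simp [hl'], ?_, ?_⟩
              · exact (lex_concat_iff _ τ' τ hl' b a).mpr (Or.inl hlex')
              · rw [List.zip_append hl'.symm]
                simp only [List.zip_cons_cons, List.zip_nil_left]
                rw [DFA.eval_append_singleton, heq', hstep]
            · refine ⟨τ ++ [b], by simp, ?_, ?_⟩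
              · exact (lex_concat_iff _ τ τ rfl b a).mpr (Or.inr ⟨rfl, hb⟩)
              · rw [List.zip_append rfl]
                simp only [List.zip_cons_cons, List.zip_nil_left]
                rw [Equiv.symm_apply_apply] at hstep
                rw [DFA.eval_append_singleton, hstep]
          · rintro ⟨τ'', hl'', hlex'', heq''⟩
            rcases List.eq_nil_or_concat τ'' with rfl | ⟨ρ, b, rfl⟩
            · simp at hl''
            · rw [List.concat_eq_append] at *
              have hlρ : ρ.length = τ.length := by simpa using hl''
              rw [List.zip_append hlρ.symm] at heq''
              simp only [List.zip_cons_cons, List.zip_nil_left] at heq''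
              rw [DFA.eval_append_singleton] at heq''
              rcases (lex_concat_iff _ ρ τ hlρ b a).mp hlex'' with h | ⟨rfl, h⟩
              · exact Or.inl ⟨e (A.eval (τ.zip ρ)), ⟨ρ, hlρ, h, by simp⟩,
                  b, by rwa [Equiv.symm_apply_apply]⟩
              · exact Or.inr ⟨b, h, by rwa [Equiv.symm_apply_apply]⟩
  intro τ
  rw [DFA.mem_accepts, key]
  have haccept : (e (A.eval (τ.zip τ)),
      {s | ∃ τ' : List Γ, τ'.length = τ.length ∧ List.Lex (· < ·) τ' τ ∧
           A.eval (τ.zip τ') = e.symm s}) ∈ B.accept ↔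
      ∀ τ' : List Γ, τ'.length = τ.length → List.Lex (· < ·) τ' τ →
        A.eval (τ.zip τ') ∉ A.accept := by
    simp only [hB, Set.mem_setOf_eq]
    constructor
    · intro h τ' hl hlex hacc
      exact h (e (A.eval (τ.zip τ'))) ⟨τ', hl, hlex, by simp⟩
        (by rwa [Equiv.symm_apply_apply])
    · rintro h s ⟨τ', hl, hlex, heq⟩ hacc
      exact h τ' hl hlex (by rwa [heq])
  rw [haccept]
  constructor
  · intro h τ' hsim
    have hl := hlen τ τ' hsim
    rcases lt_trichotomy τ τ' with hlt | heq | hgt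
    · exact Or.inr hlt
    · exact Or.inl heq
    · exfalso
      have hmem : τ.zip τ' ∈ A.accepts := (hrec τ τ' hl).mp hsim
      rw [DFA.mem_accepts] at hmem
      exact h τ' hl.symm hgt hmem
  · intro h τ' hl hlex hacc
    have hsim : sim τ τ' := (hrec τ τ' hl.symm).mpr (DFA.mem_accepts A |>.mpr hacc)
    rcases h τ' hsim with rfl | hlt
    · exact lt_irrefl τ (show τ < τ from hlex)
    · exact absurd (show τ' < τ from hlex) (lt_asymm (show τ < τ' from hlt))
end

section
/- (Partition Lemma) Let Γ be a finite type, σ a finite type, and A : DFA (Γ × Γ) σ a minimal two-tape DFA recognizing an indistinguishability relation ~ on Γ. Then the ambiguous states are exactly the non-reflexive states: for every state q of A, q is ambiguous (∃ τ : List Γ, A.evalFrom q (diag τ) ∉ A.accept) if and only if q is not reflexive (¬ ∃ τ : List Γ, A.eval (diag τ) = q). -/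
/-- The diagonal word `(c₁,c₁)…(c_ℓ,c_ℓ)` of a history `c₁…c_ℓ`. -/
def diag {Γ : Type*} (τ : List Γ) : List (Γ × Γ) := τ.map fun c => (c, c)

lemma zip_self {Γ : Type*} (τ : List Γ) : List.zip τ τ = diag τ := by
  induction τ with
  | nil => rfl
  | cons a t ih => simpa [diag] using ih

lemma zip_fst_snd {Γ : Type*} (w : List (Γ × Γ)) :
    List.zip (w.map Prod.fst) (w.map Prod.snd) = w := by
  rw [List.zip_map']; simp

/-- Partition Lemma: in a minimal two-tape DFA recognising an
indistinguishability relation, a state is ambiguous iff it is not reflexive. -/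
theorem partition_lemma {Γ σ : Type*} [Fintype Γ] [Fintype σ]
    (A : DFA (Γ × Γ) σ) (sim : List Γ → List Γ → Prop)
    (hequiv : Equivalence sim)
    (hlen : ∀ τ τ', sim τ τ' → τ.length = τ'.length)
    (hpre : ∀ τ τ' ρ ρ' : List Γ, sim τ τ' → ρ <+: τ → ρ' <+: τ' →
      ρ.length = ρ'.length → sim ρ ρ')
    (hrec : ∀ τ τ' : List Γ, τ.length = τ'.length →
      (sim τ τ' ↔ List.zip τ τ' ∈ A.accepts))
    (hreach : ∀ q : σ, ∃ w : List (Γ × Γ), A.evalFrom A.start w = q)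
    (hmin : ∀ q q' : σ,
      (∀ w : List (Γ × Γ), A.evalFrom q w ∈ A.accept ↔ A.evalFrom q' w ∈ A.accept) →
      q = q') :
    ∀ q : σ, (∃ τ : List Γ, A.evalFrom q (diag τ) ∉ A.accept) ↔
      ¬ ∃ τ : List Γ, A.eval (diag τ) = q := by
  intro q
  constructor
  · rintro ⟨τ, hτ⟩ ⟨ρ, hρ⟩
    apply hτ
    have h1 : A.evalFrom q (diag τ) = A.eval (diag (ρ ++ τ)) := by
      rw [← hρ, DFA.eval, ← DFA.evalFrom_of_append]
      simp [diag]
    rw [h1]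
    have h2 := (hrec (ρ ++ τ) (ρ ++ τ) rfl).1 (hequiv.refl _)
    rw [zip_self, DFA.mem_accepts] at h2
    exact h2
  · intro h
    by_contra hamb
    push_neg at hamb
    apply h
    obtain ⟨w, hw⟩ := hreach q
    set τ : List Γ := w.map Prod.fst with hτ
    set τ' : List Γ := w.map Prod.snd with hτ'
    have hwzip : List.zip τ τ' = w := zip_fst_snd w
    have hlw : τ.length = τ'.length := by simp [hτ, hτ']
    -- unambiguity: sim (τ ++ ρ) (τ' ++ ρ) for all ρ
    have key : ∀ ρ : List Γ, sim (τ ++ ρ) (τ' ++ ρ) := by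
      intro ρ
      have : A.eval (w ++ diag ρ) ∈ A.accept := by
        rw [DFA.eval, DFA.evalFrom_of_append, hw]; exact hamb ρ
      apply (hrec _ _ (by simp [hlw])).2
      rw [List.zip_append hlw, hwzip, zip_self, DFA.mem_accepts]
      exact this
    refine ⟨τ, hmin _ _ ?_⟩
    intro v
    have hv : List.zip (v.map Prod.fst) (v.map Prod.snd) = v := zip_fst_snd v
    have e1 : A.evalFrom (A.eval (diag τ)) v ∈ A.accept ↔
        sim (τ ++ v.map Prod.fst) (τ ++ v.map Prod.snd) := by
      rw [hrec _ _ (by simp), List.zip_append rfl, zip_self, hv, DFA.mem_accepts,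
        DFA.eval, DFA.evalFrom_of_append]
    have e2 : A.evalFrom q v ∈ A.accept ↔
        sim (τ ++ v.map Prod.fst) (τ' ++ v.map Prod.snd) := by
      rw [hrec _ _ (by simp [hlw]), List.zip_append hlw, hwzip, hv, DFA.mem_accepts, ← hw,
        ← DFA.evalFrom_of_append]
      rfl
    rw [e1, e2]
    constructor
    · intro hs
      exact hequiv.trans hs (key (v.map Prod.snd))
    · intro hs
      exact hequiv.trans hs (hequiv.symm (key (v.map Prod.snd)))
end

section
/- Let Γ be a finite type, σ a finite type, and A : DFA (Γ × Γ) σ a minimal two-tape DFA recognizing an indistinguishability relation ~ on Γ. Then for all histories τ, τ' of equal length: the state A.eval (List.zip τ τ') is reflexive if and only if τ and τ' are interchangeable, i.e. A.eval (List.zip τ π) = A.eval (List.zip τ' π) for every history π with π.length = τ.length. -/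
lemma diag_eq_zip {Γ : Type*} (τ : List Γ) : diag τ = List.zip τ τ := by
  induction τ with
  | nil => rfl
  | cons a l ih => simp [diag, List.zip_cons_cons] at *; exact ih

/-- in a minimal two-tape DFA recognising an indistinguishability
relation, the state reached on a pair of equal-length histories is reflexive
iff the two histories are interchangeable. -/
theorem reflexive_iff_interchangeable {Γ σ : Type*} [Fintype Γ] [Fintype σ]
    (A : DFA (Γ × Γ) σ) (sim : List Γ → List Γ → Prop)
    (hequiv : Equivalence sim)
    (hlen : ∀ τ τ', sim τ τ' → τ.length = τ'.length)
    (hpre : ∀ τ τ' ρ ρ' : List Γ, sim τ τ' → ρ <+: τ → ρ' <+: τ' →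
      ρ.length = ρ'.length → sim ρ ρ')
    (hrec : ∀ τ τ' : List Γ, τ.length = τ'.length →
      (sim τ τ' ↔ List.zip τ τ' ∈ A.accepts))
    (hreach : ∀ q : σ, ∃ w : List (Γ × Γ), A.evalFrom A.start w = q)
    (hmin : ∀ q q' : σ,
      (∀ w : List (Γ × Γ), A.evalFrom q w ∈ A.accept ↔ A.evalFrom q' w ∈ A.accept) →
      q = q') :
    ∀ τ τ' : List Γ, τ.length = τ'.length →
      ((∃ ρ : List Γ, A.eval (diag ρ) = A.eval (List.zip τ τ')) ↔
        (∀ π : List Γ, π.length = τ.length →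
          A.eval (List.zip τ π) = A.eval (List.zip τ' π))) := by
  intro τ τ' hττ'
  constructor
  · rintro ⟨ρ, hρ⟩ π hπ
    -- key: for all α, sim (τ ++ α) (τ' ++ α)
    have key : ∀ α : List Γ, sim (τ ++ α) (τ' ++ α) := by
      intro α
      have h1 : A.eval (List.zip (ρ ++ α) (ρ ++ α)) =
          A.eval (List.zip (τ ++ α) (τ' ++ α)) := by
        rw [List.zip_append rfl, List.zip_append hττ', ← diag_eq_zip ρ]
        show A.evalFrom A.start _ = A.evalFrom A.start _
        rw [DFA.evalFrom_of_append, DFA.evalFrom_of_append]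
        exact congrArg (fun q => A.evalFrom q (List.zip α α)) hρ
      have hsρ : sim (ρ ++ α) (ρ ++ α) := hequiv.refl _
      have hacc : List.zip (ρ ++ α) (ρ ++ α) ∈ A.accepts :=
        (hrec _ _ rfl).mp hsρ
      have hacc2 : List.zip (τ ++ α) (τ' ++ α) ∈ A.accepts := by
        rw [DFA.mem_accepts] at hacc ⊢
        rwa [h1] at hacc
      exact (hrec _ _ (by simp [hττ'])).mpr hacc2
    apply hmin
    intro w
    set α := w.map Prod.fst with hα
    set β := w.map Prod.snd with hβ
    have hw : w = List.zip α β := (zip_fst_snd w).symm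
    have hab : α.length = β.length := by simp [hα, hβ]
    have e1 : A.evalFrom (A.eval (List.zip τ π)) w =
        A.eval (List.zip (τ ++ α) (π ++ β)) := by
      rw [List.zip_append hπ.symm, hw]
      exact (DFA.evalFrom_of_append A A.start _ _).symm
    have e2 : A.evalFrom (A.eval (List.zip τ' π)) w =
        A.eval (List.zip (τ' ++ α) (π ++ β)) := by
      rw [List.zip_append (hττ' ▸ hπ.symm), hw]
      exact (DFA.evalFrom_of_append A A.start _ _).symm
    rw [e1, e2, ← DFA.mem_accepts, ← DFA.mem_accepts,
      ← hrec _ _ (by simp [hπ, hab]), ← hrec _ _ (by simp [hπ, hab, hττ'])]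
    constructor
    · intro h; exact hequiv.trans (hequiv.symm (key α)) h
    · intro h; exact hequiv.trans (key α) h
  · intro h
    exact ⟨τ', by rw [diag_eq_zip]; exact (h τ' hττ'.symm).symm⟩
end

section
/- For every k ≥ 1, define the relation ~ₖ on List Bool by: τ ~ₖ τ' iff τ.length = τ'.length and (τ = τ' or τ.length < k). Then: (a) for every finite type Σ and every function β : List Bool → Σ whose observation-history kernel equals ~ₖ (i.e. β̂ τ = β̂ τ' ↔ τ ~ₖ τ' for all τ, τ'), one has 2^k ≤ Fintype.card Σ; and (b) for every Mealy automaton (Q finite, δ : Q → Bool → Q, q₀ : Q, lam : Q → Bool → Σ) whose defined observation function β satisfies β̂ τ = β̂ τ' ↔ τ ~ₖ τ' for all τ, τ', one has 2^(k-1) ≤ Fintype.card Q. -/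
/-- The embargo relation: equal-length histories are related iff they are equal
or shorter than `k`. -/
def relK (k : ℕ) (τ τ' : List Bool) : Prop :=
  τ.length = τ'.length ∧ (τ = τ' ∨ τ.length < k)

lemma beta_inj (k : ℕ) {Ob : Type} (β : List Bool → Ob)
    (h : ∀ τ τ' : List Bool, obsHist β τ = obsHist β τ' ↔ relK k τ τ')
    {τ τ' : List Bool} (hτ : τ.length = k) (hτ' : τ'.length = k)
    (hk : 1 ≤ k) (hb : β τ = β τ') : τ = τ' := by
  obtain ⟨σ, c, rfl⟩ : ∃ σ c, τ = σ ++ [c] := by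
    rcases List.eq_nil_or_concat τ with h0 | ⟨σ, c, rfl⟩
    · subst h0; simp at hτ; omega
    · exact ⟨σ, c, by simp⟩
  obtain ⟨σ', c', rfl⟩ : ∃ σ c, τ' = σ ++ [c] := by
    rcases List.eq_nil_or_concat τ' with h0 | ⟨σ, c, rfl⟩
    · subst h0; simp at hτ'; omega
    · exact ⟨σ, c, by simp⟩
  simp at hτ hτ'
  have hσ : obsHist β σ = obsHist β σ' := by
    rw [h]; exact ⟨by omega, Or.inr (by omega)⟩
  have : obsHist β (σ ++ [c]) = obsHist β (σ' ++ [c']) := by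
    rw [obsHist_append, obsHist_append, hσ, hb]
  rw [h] at this
  rcases this.2 with h1 | h1
  · exact h1
  · simp at h1; omega

/-- any observation function representing the embargo relation
`relK k` needs at least `2^k` observation symbols, and any Mealy automaton
defining such an observation function needs at least `2^(k-1)` states. -/
theorem embargo_lower_bounds (k : ℕ) (hk : 1 ≤ k) :
    -- (a) lower bound on the observation alphabet
    (∀ (Ob : Type) (inst : Fintype Ob) (β : List Bool → Ob),
      (∀ τ τ' : List Bool, obsHist β τ = obsHist β τ' ↔ relK k τ τ') →
      2 ^ k ≤ @Fintype.card Ob inst) ∧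
    -- (b) lower bound on the number of states of a Mealy automaton
    (∀ (Q : Type) (instQ : Fintype Q) (Ob : Type)
        (δ : Q → Bool → Q) (q₀ : Q) (lam : Q → Bool → Ob) (β : List Bool → Ob),
      (∀ (τ : List Bool) (c : Bool), β (τ ++ [c]) = lam (List.foldl δ q₀ τ) c) →
      (∀ τ τ' : List Bool, obsHist β τ = obsHist β τ' ↔ relK k τ τ') →
      2 ^ (k - 1) ≤ @Fintype.card Q instQ) := by
  constructor
  · intro Ob inst β h
    have hinj : Function.Injective (fun v : Fin k → Bool => β (List.ofFn v)) := by
      intro v v' hb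
      have := beta_inj k β h (List.length_ofFn (f := v)) (List.length_ofFn (f := v')) hk hb
      exact List.ofFn_injective this
    calc 2 ^ k = Fintype.card (Fin k → Bool) := by simp
      _ ≤ Fintype.card Ob := Fintype.card_le_of_injective _ hinj
  · intro Q instQ Ob δ q₀ lam β hβ h
    have hinj : Function.Injective
        (fun v : Fin (k - 1) → Bool => List.foldl δ q₀ (List.ofFn v)) := by
      intro v v' hq
      simp only at hq
      have hb : β (List.ofFn v ++ [true]) = β (List.ofFn v' ++ [true]) := by
        rw [hβ, hβ, hq]
      have hl : (List.ofFn v ++ [true]).length = k := by simp; omega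
      have hl' : (List.ofFn v' ++ [true]).length = k := by simp; omega
      have := beta_inj k β h hl hl' hk hb
      exact List.ofFn_injective (List.append_inj_left' this (by simp))
    calc 2 ^ (k - 1) = Fintype.card (Fin (k - 1) → Bool) := by simp
      _ ≤ Fintype.card Q := Fintype.card_le_of_injective _ hinj
end
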